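/- arXiv:2012.15844 — 8 statements merged into one kernel-verified Lean document; each statement's English description precedes it below -/
import Mathlib

section
/- Let rk be a Sylvester matrix rank function on a ring R, let a ∈ R, and set b_i = rk(a^i) − rk(a^{i+1}). Then b_i ≥ b_{i+1} for every i ≥ 0; equivalently, rk(a^n) + rk(a^{n+2}) ≥ 2·rk(a^{n+1}) for all n ≥ 0. -/
/-- A Sylvester matrix rank function on a ring `R`: it assigns a non-negative real number
to each matrix over `R` satisfying (SMat1)-(SMat4). -/
structure SylvesterMatrixRank (R : Type) [Ring R] where
  rk : ∀ {n m : ℕ}, Matrix (Fin n) (Fin m) R → ℝ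
  rk_nonneg : ∀ {n m : ℕ} (A : Matrix (Fin n) (Fin m) R), 0 ≤ rk A
  rk_zero : ∀ {n m : ℕ}, rk (0 : Matrix (Fin n) (Fin m) R) = 0
  rk_one : rk (1 : Matrix (Fin 1) (Fin 1) R) = 1
  rk_mul_left : ∀ {n m k : ℕ} (A : Matrix (Fin n) (Fin m) R) (B : Matrix (Fin m) (Fin k) R),
    rk (A * B) ≤ rk A
  rk_mul_right : ∀ {n m k : ℕ} (A : Matrix (Fin n) (Fin m) R) (B : Matrix (Fin m) (Fin k) R),
    rk (A * B) ≤ rk B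
  rk_diag : ∀ {n m n' m' : ℕ} (A : Matrix (Fin n) (Fin m) R) (B : Matrix (Fin n') (Fin m') R),
    rk ((Matrix.fromBlocks A 0 0 B).submatrix finSumFinEquiv.symm finSumFinEquiv.symm)
      = rk A + rk B
  rk_triangle : ∀ {n m n' m' : ℕ} (A : Matrix (Fin n) (Fin m) R) (B : Matrix (Fin n') (Fin m') R)
      (C : Matrix (Fin n) (Fin m') R),
    rk A + rk B ≤
      rk ((Matrix.fromBlocks A C 0 B).submatrix finSumFinEquiv.symm finSumFinEquiv.symm)

/-!
Frobenius' inequality `rk (x y) + rk (y z) ≤ rk y + rk (x y z)` for a Sylvester rank function,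
applied to `x = z = a`, `y = aⁿ`. It comes from the matrix `M = [[y, y z], [x y, 0]]`: permuting
its columns makes it upper triangular with diagonal `y z, x y`, and elementary row and column
operations turn it into `diag (y, -x y z)`.
-/

lemma Matrix.fromBlocks_of_one_submatrix {α : Type*} (x y z w : α) :
    (Matrix.fromBlocks !![x] !![y] !![z] !![w]).submatrix finSumFinEquiv.symm
      finSumFinEquiv.symm = !![x, y; z, w] := by
  ext i j
  fin_cases i <;> fin_cases j <;> simp [finSumFinEquiv, Fin.addCases, Fin.subNat]

lemma Matrix.zero_fin_one {α : Type*} [Zero α] : (0 : Matrix (Fin 1) (Fin 1) α) = !![0] := by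
  ext i j
  fin_cases i; fin_cases j; rfl

namespace SylvesterMatrixRank

variable {R : Type} [Ring R] (rk : SylvesterMatrixRank R)

lemma rk_diag_two (x w : R) : rk.rk !![x, 0; 0, w] = rk.rk !![x] + rk.rk !![w] := by
  simpa only [Matrix.zero_fin_one, Matrix.fromBlocks_of_one_submatrix] using
    rk.rk_diag !![x] !![w]

lemma rk_add_rk_le_rk_upper_triangular (x y w : R) :
    rk.rk !![x] + rk.rk !![w] ≤ rk.rk !![x, y; 0, w] := by
  simpa only [Matrix.zero_fin_one, Matrix.fromBlocks_of_one_submatrix] using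
    rk.rk_triangle !![x] !![w] !![y]

lemma rk_neg {n m : ℕ} (A : Matrix (Fin n) (Fin m) R) : rk.rk (-A) = rk.rk A := by
  have h : ∀ B : Matrix (Fin n) (Fin m) R, rk.rk (-B) ≤ rk.rk B := fun B => by
    simpa using rk.rk_mul_left B (-1 : Matrix (Fin m) (Fin m) R)
  exact le_antisymm (h A) (by simpa using h (-A))

lemma rk_mul_mul_le {n m k l : ℕ} (A : Matrix (Fin n) (Fin m) R) (B : Matrix (Fin m) (Fin k) R)
    (C : Matrix (Fin k) (Fin l) R) : rk.rk (A * B * C) ≤ rk.rk B :=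
  (rk.rk_mul_left _ _).trans (rk.rk_mul_right _ _)

theorem rk_mul_add_rk_mul_le (x y z : R) :
    rk.rk !![x * y] + rk.rk !![y * z] ≤ rk.rk !![y] + rk.rk !![x * y * z] := by
  set M : Matrix (Fin 2) (Fin 2) R := !![y, y * z; x * y, 0]
  have lower : rk.rk !![y * z] + rk.rk !![x * y] ≤ rk.rk M := calc
    _ ≤ rk.rk !![y * z, y; 0, x * y] := rk.rk_add_rk_le_rk_upper_triangular _ _ _
    _ = rk.rk (M * !![0, 1; 1, 0]) := by
      congr 1; ext i j; fin_cases i <;> fin_cases j <;> simp [M]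
    _ ≤ rk.rk M := rk.rk_mul_left _ _
  have upper : rk.rk M ≤ rk.rk !![y] + rk.rk !![x * y * z] := calc
    _ = rk.rk (!![1, 0; x, 1] * !![y, 0; 0, -(x * y * z)] * !![1, z; 0, 1]) := by
      congr 1; ext i j; fin_cases i <;> fin_cases j <;> simp [M, mul_assoc]
    _ ≤ rk.rk !![y, 0; 0, -(x * y * z)] := rk.rk_mul_mul_le _ _ _
    _ = rk.rk !![y] + rk.rk !![x * y * z] := by
      rw [rk_diag_two, ← rk.rk_neg !![x * y * z]]
      congr 2; ext i j; fin_cases i; fin_cases j; rfl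
  linarith

end SylvesterMatrixRank

/-- For a Sylvester matrix rank function `rk` and `a ∈ R`, the differences
`b i = rk (a^i) - rk (a^(i+1))` are non-increasing; equivalently
`rk (a^n) + rk (a^(n+2)) ≥ 2 * rk (a^(n+1))` for all `n`. -/
theorem rk_pow_differences_antitone {R : Type} [Ring R] (rk : SylvesterMatrixRank R)
    (a : R) (b : ℕ → ℝ) (hb : ∀ i : ℕ, b i = rk.rk !![a ^ i] - rk.rk !![a ^ (i + 1)]) :
    (∀ i : ℕ, b (i + 1) ≤ b i) ∧
      (∀ n : ℕ, 2 * rk.rk !![a ^ (n + 1)] ≤ rk.rk !![a ^ n] + rk.rk !![a ^ (n + 2)]) := by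
  have convex (n : ℕ) :
      2 * rk.rk !![a ^ (n + 1)] ≤ rk.rk !![a ^ n] + rk.rk !![a ^ (n + 2)] := by
    have h := rk.rk_mul_add_rk_mul_le a (a ^ n) a
    rw [← pow_succ', ← pow_succ, ← pow_succ] at h
    linarith
  refine ⟨fun i => ?_, convex⟩
  rw [hb, hb]
  linarith [convex i]
end

section
/- Let rk be a Sylvester matrix rank function on a ring R and let A, B be n×m matrices over R. If there exist an n×n matrix C and an m×m matrix D over R with C·A = A, B·D = B, A·D = 0 and C·B = 0, then rk(A+B) = rk(A) + rk(B). -/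
/-!
Every Sylvester rank function is subadditive, since `A + B = [1 1] · diag(A, B) · [1; 1]`.
Conversely, `C` acts as the identity on `A` and kills `B` from the left, and `D` does the same
for `B` and `A` from the right, so `[1; C] · (A + B) · [D 1] = [[B, A + B], [0, A]]`; by (SMat4)
the rank of this block triangular matrix is at least `rk B + rk A`.
-/

namespace Matrix

theorem fromRows_one_mul_add_mul_fromCols {R ι κ : Type*} [Ring R] [Fintype ι] [Fintype κ]
    [DecidableEq ι] [DecidableEq κ] {A B : Matrix ι κ R} {C : Matrix ι ι R} {D : Matrix κ κ R}
    (hCA : C * A = A) (hBD : B * D = B) (hAD : A * D = 0) (hCB : C * B = 0) :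
    fromRows 1 C * (A + B) * fromCols D 1 = fromBlocks B (A + B) 0 A := by
  have hCAB : C * (A + B) = A := by rw [Matrix.mul_add, hCA, hCB, add_zero]
  have hABD : (A + B) * D = B := by rw [Matrix.add_mul, hAD, hBD, zero_add]
  rw [fromRows_mul, fromRows_mul_fromCols, Matrix.one_mul, hCAB, hABD, hAD]
  simp only [Matrix.mul_one]

end Matrix

namespace SylvesterMatrixRank

open Matrix

variable {R : Type} [Ring R] (rk : SylvesterMatrixRank R)

theorem rk_mul_mul_le_s4 {a b c d : ℕ} (P : Matrix (Fin a) (Fin b) R)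
    (X : Matrix (Fin b) (Fin c) R) (Q : Matrix (Fin c) (Fin d) R) :
    rk.rk (P * X * Q) ≤ rk.rk X :=
  (rk.rk_mul_left _ Q).trans (rk.rk_mul_right P X)

theorem rk_mul_mul_le_rk_submatrix {a b n n' m m' : ℕ} (P : Matrix (Fin a) (Fin n ⊕ Fin n') R)
    (X : Matrix (Fin n ⊕ Fin n') (Fin m ⊕ Fin m') R) (Q : Matrix (Fin m ⊕ Fin m') (Fin b) R) :
    rk.rk (P * X * Q) ≤ rk.rk (X.submatrix finSumFinEquiv.symm finSumFinEquiv.symm) := by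
  have hreindex : P * X * Q = P.submatrix id finSumFinEquiv.symm *
      X.submatrix finSumFinEquiv.symm finSumFinEquiv.symm * Q.submatrix finSumFinEquiv.symm id := by
    rw [submatrix_mul_equiv, submatrix_mul_equiv, submatrix_id_id]
  rw [hreindex]
  exact rk.rk_mul_mul_le_s4 _ _ _

theorem rk_submatrix_mul_mul_le {a b n n' m m' : ℕ} (P : Matrix (Fin n ⊕ Fin n') (Fin a) R)
    (X : Matrix (Fin a) (Fin b) R) (Q : Matrix (Fin b) (Fin m ⊕ Fin m') R) :
    rk.rk ((P * X * Q).submatrix finSumFinEquiv.symm finSumFinEquiv.symm) ≤ rk.rk X := by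
  have hreindex : (P * X * Q).submatrix finSumFinEquiv.symm finSumFinEquiv.symm =
      P.submatrix finSumFinEquiv.symm id * X * Q.submatrix id finSumFinEquiv.symm := by
    rw [submatrix_mul _ _ _ id _ Function.bijective_id,
      submatrix_mul _ _ _ id _ Function.bijective_id, submatrix_id_id]
  rw [hreindex]
  exact rk.rk_mul_mul_le_s4 _ _ _

theorem rk_add_le {n m : ℕ} (A B : Matrix (Fin n) (Fin m) R) :
    rk.rk (A + B) ≤ rk.rk A + rk.rk B := by
  have hfactor : fromCols (1 : Matrix (Fin n) (Fin n) R) (1 : Matrix (Fin n) (Fin n) R) *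
      fromBlocks A 0 0 B * fromRows (1 : Matrix (Fin m) (Fin m) R) (1 : Matrix (Fin m) (Fin m) R)
      = A + B := by
    rw [fromCols_mul_fromBlocks, fromCols_mul_fromRows]
    simp
  calc rk.rk (A + B)
      ≤ rk.rk ((fromBlocks A 0 0 B).submatrix finSumFinEquiv.symm finSumFinEquiv.symm) := by
        rw [← hfactor]
        exact rk.rk_mul_mul_le_rk_submatrix _ _ _
    _ = rk.rk A + rk.rk B := rk.rk_diag A B

theorem rk_add_rk_le_rk_add {n m : ℕ} {A B : Matrix (Fin n) (Fin m) R}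
    {C : Matrix (Fin n) (Fin n) R} {D : Matrix (Fin m) (Fin m) R}
    (hCA : C * A = A) (hBD : B * D = B) (hAD : A * D = 0) (hCB : C * B = 0) :
    rk.rk A + rk.rk B ≤ rk.rk (A + B) := by
  calc rk.rk A + rk.rk B
      = rk.rk B + rk.rk A := add_comm _ _
    _ ≤ rk.rk ((fromBlocks B (A + B) 0 A).submatrix finSumFinEquiv.symm finSumFinEquiv.symm) :=
        rk.rk_triangle B A (A + B)
    _ ≤ rk.rk (A + B) := by
        rw [← fromRows_one_mul_add_mul_fromCols hCA hBD hAD hCB]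
        exact rk.rk_submatrix_mul_mul_le _ _ _

end SylvesterMatrixRank

/-- If `C * A = A`, `B * D = B`, `A * D = 0` and `C * B = 0`, then
`rk (A + B) = rk A + rk B` for any Sylvester matrix rank function `rk`. -/
theorem rk_additivity {R : Type} [Ring R] (rk : SylvesterMatrixRank R)
    {n m : ℕ} (A B : Matrix (Fin n) (Fin m) R)
    (C : Matrix (Fin n) (Fin n) R) (D : Matrix (Fin m) (Fin m) R)
    (hCA : C * A = A) (hBD : B * D = B) (hAD : A * D = 0) (hCB : C * B = 0) :
    rk.rk (A + B) = rk.rk A + rk.rk B :=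
  le_antisymm (rk.rk_add_le A B) (rk.rk_add_rk_le_rk_add hCA hBD hAD hCB)
end

section
/- Let O be a Dedekind domain and dim a Sylvester module rank function on O. Then dim(I) = 1 for every non-zero ideal I of O. -/
/-- A Sylvester module rank function on a ring `R`: it assigns a non-negative real number
to each finitely presented left `R`-module (invariantly under isomorphism) satisfying
(SMod1)-(SMod3). -/
structure SylvesterModuleRank (R : Type) [Ring R] where
  d : (M : Type) → [AddCommGroup M] → [Module R M] → ℝ
  d_nonneg : ∀ (M : Type) [AddCommGroup M] [Module R M],
    Module.FinitePresentation R M → 0 ≤ d M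
  d_congr : ∀ (M N : Type) [AddCommGroup M] [Module R M] [AddCommGroup N] [Module R N],
    Module.FinitePresentation R M → (M ≃ₗ[R] N) → d M = d N
  d_bot : d PUnit = 0
  d_self : d R = 1
  d_add : ∀ (M N : Type) [AddCommGroup M] [Module R M] [AddCommGroup N] [Module R N],
    Module.FinitePresentation R M → Module.FinitePresentation R N →
      d (M × N) = d M + d N
  d_exact : ∀ (M₁ M₂ M₃ : Type) [AddCommGroup M₁] [Module R M₁] [AddCommGroup M₂]
      [Module R M₂] [AddCommGroup M₃] [Module R M₃],
    Module.FinitePresentation R M₁ → Module.FinitePresentation R M₂ →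
    Module.FinitePresentation R M₃ →
    ∀ (f : M₁ →ₗ[R] M₂) (g : M₂ →ₗ[R] M₃), Function.Exact f g → Function.Surjective g →
      d M₃ ≤ d M₂ ∧ d M₂ ≤ d M₁ + d M₃


/-!
By Steinitz' relation `I ⊕ J ≅ O ⊕ IJ`, the function `δ(I) = dim I - 1` is additive on non-zero
ideals, so `δ(Iⁿ) = n δ(I)`; since `dim ≥ 0` this forces `δ(I) ≥ 0`. Choosing `J` in the inverse
ideal class makes `IJ` principal, whence `δ(I) + δ(J) = δ(O) = 0` and both vanish.

The relation itself reduces to the coprime case `I + J = O`, after moving `I` within its ideal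
class away from the primes dividing `J`.
-/

open scoped nonZeroDivisors

instance Ideal.finitePresentation {R : Type*} [CommRing R] [IsNoetherianRing R] (I : Ideal R) :
    Module.FinitePresentation R I :=
  Module.finitePresentation_of_finite R I

namespace Ideal

variable {R : Type*} [CommRing R]

/-- The matrix `!![1, 1; b, -a]` has determinant `-(a + b) = -1`. -/
def prodEquivOfAddEqOne {A B : Ideal R} {a b : R} (ha : a ∈ A) (hb : b ∈ B) (hab : a + b = 1) :
    (A × B) ≃ₗ[R] R × ↥(A * B) where
  toFun p := (p.1 + p.2, ⟨p.1 * b - a * p.2,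
    sub_mem (mul_mem_mul p.1.2 hb) (mul_mem_mul ha p.2.2)⟩)
  map_add' p q := by
    refine Prod.ext ?_ (Subtype.ext ?_) <;> dsimp <;> ring
  map_smul' c p := by
    refine Prod.ext ?_ (Subtype.ext ?_) <;> dsimp <;> ring
  invFun q := (⟨a * q.1 + q.2, add_mem (mul_mem_right _ _ ha) (mul_le_left q.2.2)⟩,
    ⟨b * q.1 - q.2, sub_mem (mul_mem_right _ _ hb) (mul_le_right q.2.2)⟩)
  left_inv p := by
    refine Prod.ext (Subtype.ext ?_) (Subtype.ext ?_) <;> dsimp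
    · linear_combination (p.1 : R) * hab
    · linear_combination (p.2 : R) * hab
  right_inv q := by
    refine Prod.ext ?_ (Subtype.ext ?_) <;> dsimp
    · linear_combination q.1 * hab
    · linear_combination (q.2 : R) * hab

theorem nonempty_prod_linearEquiv_of_sup_eq_top {A B : Ideal R} (h : A ⊔ B = ⊤) :
    Nonempty ((A × B) ≃ₗ[R] R × ↥(A * B)) := by
  obtain ⟨a, ha, b, hb, hab⟩ := Submodule.mem_sup.mp (h ▸ Submodule.mem_top : (1 : R) ∈ A ⊔ B)
  exact ⟨prodEquivOfAddEqOne ha hb hab⟩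

theorem span_singleton_mul_eq_map (x : R) (I : Ideal R) :
    span {x} * I = Submodule.map (LinearMap.mulLeft R x) I := by
  ext y
  simp [mem_span_singleton_mul]

noncomputable def spanSingletonMulEquiv [IsDomain R] {x : R} (hx : x ≠ 0) (I : Ideal R) :
    ↥(span {x} * I) ≃ₗ[R] I :=
  LinearEquiv.ofEq _ _ (span_singleton_mul_eq_map x I) ≪≫ₗ
    (Submodule.equivMapOfInjective _ (mul_right_injective₀ hx) I).symm

end Ideal

namespace ClassGroup

variable {R : Type*} [CommRing R] [IsDedekindDomain R]

theorem nonempty_linearEquiv_of_mk0_eq {I J : (Ideal R)⁰} (h : mk0 I = mk0 J) :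
    Nonempty ((I : Ideal R) ≃ₗ[R] (J : Ideal R)) := by
  obtain ⟨x, y, hx, hy, hxy⟩ := mk0_eq_mk0_iff.mp h
  exact ⟨(Ideal.spanSingletonMulEquiv hx I).symm ≪≫ₗ LinearEquiv.ofEq _ _ hxy ≪≫ₗ
    Ideal.spanSingletonMulEquiv hy J⟩

theorem exists_mk0_eq_and_sup_eq_top (I : (Ideal R)⁰) {C : Ideal R} (hC : C ≠ ⊥) :
    ∃ B : (Ideal R)⁰, mk0 B = mk0 I ∧ (B : Ideal R) ⊔ C = ⊤ := by
  by_cases hCtop : C = ⊤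
  · exact ⟨I, rfl, by simp [hCtop]⟩
  obtain ⟨J, hJ⟩ := mk0_surjective (mk0 I)⁻¹
  have hJ0 : (J : Ideal R) ≠ ⊥ := nonZeroDivisors.coe_ne_zero J
  -- Choosing `r` with `JC + (r) = J` and writing `(r) = JB` gives `J(C + B) = J`, and the class
  -- of `B` is inverse to that of `J`.
  obtain ⟨r, hr⟩ :=
    IsDedekindDomain.exists_sup_span_eq (Ideal.mul_le_left : (J : Ideal R) * C ≤ J)
      (mul_ne_zero hJ0 hC)
  obtain ⟨B, hB⟩ : (J : Ideal R) ∣ Ideal.span {r} := Ideal.dvd_iff_le.mpr (hr ▸ le_sup_right)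
  have hr0 : r ≠ 0 := by
    rintro rfl
    refine hCtop (mul_left_cancel₀ hJ0 ?_)
    simpa using hr
  have hB0 : B ≠ ⊥ := by
    rintro rfl
    rw [Ideal.mul_bot, Ideal.span_singleton_eq_bot] at hB
    exact hr0 hB
  refine ⟨⟨B, mem_nonZeroDivisors_of_ne_zero hB0⟩, ?_, ?_⟩
  · rw [← inv_inv (mk0 I), ← hJ, mk0_eq_mk0_inv_iff]
    exact ⟨r, hr0, by rw [mul_comm, hB]⟩
  · refine mul_left_cancel₀ hJ0 ?_
    rw [Ideal.mul_sup, ← hB, Ideal.mul_top, sup_comm, hr]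

end ClassGroup

theorem IsDedekindDomain.nonempty_prod_linearEquiv_prod_mul {R : Type*} [CommRing R]
    [IsDedekindDomain R] {I J : Ideal R} (hI : I ≠ ⊥) (hJ : J ≠ ⊥) :
    Nonempty ((I × J) ≃ₗ[R] R × ↥(I * J)) := by
  let I' : (Ideal R)⁰ := ⟨I, mem_nonZeroDivisors_of_ne_zero hI⟩
  let J' : (Ideal R)⁰ := ⟨J, mem_nonZeroDivisors_of_ne_zero hJ⟩
  obtain ⟨B, hBI, hBJ⟩ := ClassGroup.exists_mk0_eq_and_sup_eq_top I' hJ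
  have hBJI : ClassGroup.mk0 (B * J') = ClassGroup.mk0 (I' * J') := by
    rw [map_mul, map_mul, hBI]
  obtain ⟨eBI⟩ := ClassGroup.nonempty_linearEquiv_of_mk0_eq hBI
  obtain ⟨eBJI⟩ := ClassGroup.nonempty_linearEquiv_of_mk0_eq hBJI
  obtain ⟨eBJ⟩ := Ideal.nonempty_prod_linearEquiv_of_sup_eq_top hBJ
  exact ⟨eBI.symm.prodCongr (LinearEquiv.refl R J) ≪≫ₗ eBJ ≪≫ₗ
    (LinearEquiv.refl R R).prodCongr eBJI⟩

namespace SylvesterModuleRank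

variable {R : Type} [CommRing R] (dim : SylvesterModuleRank R)

theorem d_span_singleton [IsDomain R] {x : R} (hx : x ≠ 0) : dim.d (Ideal.span {x}) = 1 := by
  rw [← dim.d_congr R _ inferInstance (LinearEquiv.toSpanNonzeroSingleton R R x hx), dim.d_self]

variable [IsDedekindDomain R] {I J : Ideal R}

theorem d_add_d_eq_one_add_d_mul (hI : I ≠ ⊥) (hJ : J ≠ ⊥) :
    dim.d I + dim.d J = 1 + dim.d ↥(I * J) := by
  obtain ⟨e⟩ := IsDedekindDomain.nonempty_prod_linearEquiv_prod_mul hI hJ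
  rw [← dim.d_add _ _ inferInstance inferInstance, dim.d_congr _ _ inferInstance e,
    dim.d_add _ _ inferInstance inferInstance, dim.d_self]

theorem d_pow (hI : I ≠ ⊥) (n : ℕ) : dim.d ↥(I ^ n) = 1 + n * (dim.d I - 1) := by
  induction n with
  | zero =>
    rw [pow_zero, Ideal.one_eq_top, ← Ideal.span_singleton_one, dim.d_span_singleton one_ne_zero]
    simp
  | succ n ih =>
    have hmul := dim.d_add_d_eq_one_add_d_mul hI (pow_ne_zero n hI)
    rw [← pow_succ'] at hmul
    push_cast
    linarith

theorem one_le_d (hI : I ≠ ⊥) : 1 ≤ dim.d I := by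
  by_contra! h
  obtain ⟨n, hn⟩ := exists_nat_gt (1 - dim.d I)⁻¹
  have hpow := dim.d_nonneg ↥(I ^ n) inferInstance
  rw [dim.d_pow hI n] at hpow
  rw [inv_lt_iff_one_lt_mul₀ (by linarith)] at hn
  linarith

end SylvesterModuleRank

/-- If `dim` is a Sylvester module rank function on a Dedekind domain `O`, then
`dim I = 1` for every non-zero ideal `I` of `O`. -/
theorem d_ideal_eq_one {O : Type} [CommRing O] [IsDedekindDomain O]
    (dim : SylvesterModuleRank O) (I : Ideal O) (hI : I ≠ ⊥) :
    dim.d I = 1 := by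
  obtain ⟨J, hJ⟩ :=
    ClassGroup.mk0_surjective (ClassGroup.mk0 ⟨I, mem_nonZeroDivisors_of_ne_zero hI⟩)⁻¹
  obtain ⟨x, hx, hJI⟩ := ClassGroup.mk0_eq_mk0_inv_iff.mp hJ
  have hJ0 : (J : Ideal O) ≠ ⊥ := nonZeroDivisors.coe_ne_zero J
  have hsum := dim.d_add_d_eq_one_add_d_mul hJ0 hI
  rw [hJI, dim.d_span_singleton hx] at hsum
  linarith [dim.one_le_d hI, dim.one_le_d hJ0]
end

section
/- Let O be a Dedekind domain, m a maximal ideal, and dim a Sylvester module rank function on O. Setting b_0 = dim(O/m) and b_k = dim(O/m^{k+1}) − dim(O/m^k) for k ≥ 1, we have b_k ≥ b_{k+1} ≥ 0 for every k ≥ 0. -/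
/-! Writing `D j = dim (O ⧸ m ^ j)`, the claim is that `D` is non-decreasing and concave
(with `D 0 ≥ 0`). Monotonicity comes from the surjections `O ⧸ m ^ (j + 1) → O ⧸ m ^ j`.
For concavity pick `x ∈ m` with `m = (x) + m ^ 2` (possible in a Dedekind domain); then
`O ⧸ m ^ (n + 1) → O ⧸ m ^ (n + 2) × O ⧸ m ^ n → O ⧸ m ^ (n + 1) → 0`,
`w ↦ (x w, w)`, `(a, c) ↦ a - x c`, is exact and (SMod3) gives
`D (n + 2) + D n ≤ 2 D (n + 1)`. -/

namespace SylvesterModuleRank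

variable {R : Type} [Ring R] [IsNoetherianRing R] (dim : SylvesterModuleRank R)
  {M₁ M₂ M₃ : Type} [AddCommGroup M₁] [Module R M₁] [AddCommGroup M₂] [Module R M₂]
  [AddCommGroup M₃] [Module R M₃]

theorem d_nonneg_of_finite [Module.Finite R M₁] : 0 ≤ dim.d M₁ :=
  dim.d_nonneg _ (Module.finitePresentation_of_finite R M₁)

theorem d_prod [Module.Finite R M₁] [Module.Finite R M₂] :
    dim.d (M₁ × M₂) = dim.d M₁ + dim.d M₂ :=
  dim.d_add _ _ (Module.finitePresentation_of_finite R M₁)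
    (Module.finitePresentation_of_finite R M₂)

theorem d_le_add_of_exact [Module.Finite R M₁] [Module.Finite R M₂] {f : M₁ →ₗ[R] M₂}
    {g : M₂ →ₗ[R] M₃} (hfg : Function.Exact f g) (hg : Function.Surjective g) :
    dim.d M₂ ≤ dim.d M₁ + dim.d M₃ :=
  have : Module.Finite R M₃ := Module.Finite.of_surjective g hg
  (dim.d_exact _ _ _ (Module.finitePresentation_of_finite R M₁)
    (Module.finitePresentation_of_finite R M₂) (Module.finitePresentation_of_finite R M₃)
    f g hfg hg).2

theorem d_le_of_surjective [Module.Finite R M₂] {g : M₂ →ₗ[R] M₃}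
    (hg : Function.Surjective g) : dim.d M₃ ≤ dim.d M₂ :=
  have : Module.Finite R M₃ := Module.Finite.of_surjective g hg
  (dim.d_exact _ _ _ (Module.finitePresentation_of_finite R (LinearMap.ker g))
    (Module.finitePresentation_of_finite R M₂) (Module.finitePresentation_of_finite R M₃)
    _ g g.exact_subtype_ker_map hg).1

theorem d_quotient_le_of_le {I J : Ideal R} (h : I ≤ J) : dim.d (R ⧸ J) ≤ dim.d (R ⧸ I) :=
  dim.d_le_of_surjective (Submodule.factor_surjective h)

end SylvesterModuleRank

namespace Ideal

variable {O : Type} [CommRing O]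

theorem pow_le_span_pow_sup_pow_succ {m : Ideal O} {x : O} (hx : x ∈ m)
    (hm : m ≤ span {x} ⊔ m ^ 2) (j : ℕ) : m ^ j ≤ span {x ^ j} ⊔ m ^ (j + 1) := by
  induction j with
  | zero => simp
  | succ j ih =>
    have hxj : span {x ^ j} * m ^ 2 ≤ m ^ (j + 1 + 1) :=
      (mul_mono_left ((span_singleton_le_iff_mem _).mpr (pow_mem_pow hx j))).trans_eq
        (pow_add m j 2).symm
    calc m ^ (j + 1) = m ^ j * m := pow_succ m j
      _ ≤ (span {x ^ j} ⊔ m ^ (j + 1)) * m := mul_mono_left ih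
      _ = span {x ^ j} * m ⊔ m ^ (j + 1 + 1) := by rw [sup_mul, ← pow_succ]
      _ ≤ span {x ^ j} * (span {x} ⊔ m ^ 2) ⊔ m ^ (j + 1 + 1) := by gcongr
      _ ≤ span {x ^ (j + 1)} ⊔ m ^ (j + 1 + 1) := by
        rw [mul_sup, span_singleton_mul_span_singleton, ← pow_succ]
        exact sup_le (sup_le_sup_left hxj _) le_sup_right

theorem exists_mem_le_span_singleton_sup_sq [IsDedekindDomain O] (m : Ideal O) [hm : m.IsPrime] :
    ∃ x ∈ m, m ≤ span {x} ⊔ m ^ 2 := by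
  by_cases hbot : m = ⊥
  · exact ⟨0, by simp [hbot]⟩
  obtain ⟨x, hxm, hxm2⟩ := SetLike.exists_of_lt (by simpa using pow_succ_lt_pow hbot 1)
  refine ⟨x, hxm, ?_⟩
  have hle : span {x} ⊔ m ^ 2 ≤ m :=
    sup_le ((span_singleton_le_iff_mem _).mpr hxm) (pow_le_self two_ne_zero)
  -- `(x) + m ^ 2` divides `m ^ 2`, so it is `1`, `m` or `m ^ 2`
  obtain ⟨i, hi, hpow⟩ :=
    (dvd_prime_pow (prime_of_isPrime hbot hm) 2).mp
      (dvd_iff_le.mpr (le_sup_right : m ^ 2 ≤ span {x} ⊔ m ^ 2))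
  rw [associated_iff_eq] at hpow
  interval_cases i
  · rw [hpow, pow_zero, one_eq_top] at hle
    exact absurd (top_unique hle) hm.ne_top
  · simp [hpow]
  · exact absurd (hpow ▸ mem_sup_left (mem_span_singleton_self x)) hxm2

def mulQuotientPow {m : Ideal O} {x : O} (hx : x ∈ m) (n : ℕ) :
    (O ⧸ m ^ n) →ₗ[O] O ⧸ m ^ (n + 1) :=
  Submodule.mapQ _ _ (LinearMap.mulLeft O x) fun a ha => by
    rw [pow_succ']
    exact mul_mem_mul hx ha

theorem exact_mulQuotientPow_prod_factor {m : Ideal O} {x : O} (hx : x ∈ m) {n : ℕ}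
    (hspan : m ^ (n + 1) ≤ span {x ^ (n + 1)} ⊔ m ^ (n + 1 + 1)) :
    Function.Exact
      ((mulQuotientPow hx (n + 1)).prod (Submodule.factor (pow_le_pow_right (I := m) n.le_succ)))
      ((Submodule.factor (pow_le_pow_right (I := m) (n + 1).le_succ)).coprod
        (-mulQuotientPow hx n)) := by
  have hf (w : O) : (mulQuotientPow hx (n + 1)).prod
      (Submodule.factor (pow_le_pow_right (I := m) n.le_succ)) (Submodule.Quotient.mk w)
      = (Submodule.Quotient.mk (x * w), Submodule.Quotient.mk w) := rfl
  have hg (a c : O) : (Submodule.factor (pow_le_pow_right (I := m) (n + 1).le_succ)).coprod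
      (-mulQuotientPow hx n) (Submodule.Quotient.mk a, Submodule.Quotient.mk c)
      = (Submodule.Quotient.mk (a - x * c) : O ⧸ m ^ (n + 1)) := by
    rw [Submodule.Quotient.mk_sub, sub_eq_add_neg]
    rfl
  rintro ⟨u, v⟩
  obtain ⟨a, rfl⟩ := Submodule.Quotient.mk_surjective _ u
  obtain ⟨c, rfl⟩ := Submodule.Quotient.mk_surjective _ v
  rw [hg, Submodule.Quotient.mk_eq_zero]
  constructor
  · intro h
    obtain ⟨p, hp, r, hr, hpr⟩ := Submodule.mem_sup.mp (hspan h)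
    obtain ⟨t, rfl⟩ := mem_span_singleton'.mp hp
    refine ⟨Submodule.Quotient.mk (c + t * x ^ n), ?_⟩
    rw [hf, Prod.mk.injEq, Submodule.Quotient.eq, Submodule.Quotient.eq]
    constructor
    · convert neg_mem hr using 1
      linear_combination hpr
    · simpa using mul_mem_left _ t (pow_mem_pow hx n)
  · rintro ⟨w, hw⟩
    obtain ⟨w, rfl⟩ := Submodule.Quotient.mk_surjective _ w
    rw [hf, Prod.mk.injEq, Submodule.Quotient.eq, Submodule.Quotient.eq] at hw
    obtain ⟨hxw, hwc⟩ := hw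
    have hmul : x * (w - c) ∈ m ^ (n + 1) := pow_succ' m n ▸ mul_mem_mul hx hwc
    convert sub_mem hmul (pow_le_pow_right (n + 1).le_succ hxw) using 1
    ring

end Ideal

theorem SylvesterModuleRank.d_quotient_pow_concave {O : Type} [CommRing O] [IsDedekindDomain O]
    (dim : SylvesterModuleRank O) (m : Ideal O) [m.IsPrime] (n : ℕ) :
    dim.d (O ⧸ m ^ (n + 1 + 1)) + dim.d (O ⧸ m ^ n) ≤ 2 * dim.d (O ⧸ m ^ (n + 1)) := by
  obtain ⟨x, hx, hm⟩ := m.exists_mem_le_span_singleton_sup_sq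
  have hsurj : Function.Surjective
      ((Submodule.factor (Ideal.pow_le_pow_right (I := m) (n + 1).le_succ)).coprod
        (-Ideal.mulQuotientPow hx n)) := fun y => by
    obtain ⟨z, rfl⟩ := Submodule.factor_surjective (Ideal.pow_le_pow_right (n + 1).le_succ) y
    exact ⟨(z, 0), by simp⟩
  have := dim.d_le_add_of_exact
    (Ideal.exact_mulQuotientPow_prod_factor hx (Ideal.pow_le_span_pow_sup_pow_succ hx hm _)) hsurj
  rw [dim.d_prod] at this
  linarith

/-- Let `O` be a Dedekind domain, `m` a maximal ideal and `dim` a Sylvester module rank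
function on `O`. Setting `b 0 = dim (O ⧸ m)` and `b k = dim (O ⧸ m^(k+1)) - dim (O ⧸ m^k)`
for `k ≥ 1`, we have `b k ≥ b (k+1) ≥ 0` for every `k ≥ 0`. -/
theorem d_differences_antitone {O : Type} [CommRing O] [IsDedekindDomain O]
    (dim : SylvesterModuleRank O) (m : Ideal O) (hm : m.IsMaximal)
    (b : ℕ → ℝ) (hb0 : b 0 = dim.d (O ⧸ m))
    (hb : ∀ k : ℕ, 1 ≤ k → b k = dim.d (O ⧸ m ^ (k + 1)) - dim.d (O ⧸ m ^ k)) :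
    ∀ k : ℕ, b (k + 1) ≤ b k ∧ 0 ≤ b (k + 1) := by
  have := hm.isPrime
  intro k
  have hconcave := dim.d_quotient_pow_concave m k
  have hmono := dim.d_quotient_le_of_le (Ideal.pow_le_pow_right (I := m) (k + 1).le_succ)
  rw [hb (k + 1) k.succ_pos]
  refine ⟨?_, by linarith⟩
  rcases k with _ | k
  · rw [hb0]
    rw [zero_add, pow_one] at hconcave ⊢
    linarith [dim.d_nonneg_of_finite (M₁ := O ⧸ m ^ 0)]
  · rw [hb (k + 1) k.succ_pos]
    linarith
end

section
/- Let R be a left Noetherian ring and M a non-zero finitely generated completely faithful left R-module with Krull dimension strictly less than the Krull dimension of R as a left module over itself. Then M contains a cyclic submodule N with Kdim(M/N) < Kdim(M). -/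
/-- `KdimLE R α M` means that the (Rentschler–Gabriel) Krull dimension of the left
`R`-module `M` is at most the ordinal `α`: for every descending chain
`f 0 ≥ f 1 ≥ ⋯` of submodules of `M`, for all but finitely many `i` the factor
`f i / f (i+1)` is zero or has Krull dimension at most some `β < α`. -/
def KdimLE (R : Type) [Ring R] (α : Ordinal) (M : Type) [AddCommGroup M]
    [Module R M] : Prop :=
  ∀ f : ℕ → Submodule R M, Antitone f →
    {i : ℕ | ¬ (Subsingleton (↥(f i) ⧸ (Submodule.comap (f i).subtype (f (i + 1)))) ∨
      ∃ β : Ordinal, ∃ _ : β < α,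
        KdimLE R β (↥(f i) ⧸ (Submodule.comap (f i).subtype (f (i + 1)))))}.Finite
termination_by α
decreasing_by assumption

/-- `HasKdim R α M` means that the Krull dimension of the non-zero left `R`-module `M`
is exactly the ordinal `α`. -/
def HasKdim (R : Type) [Ring R] (α : Ordinal) (M : Type) [AddCommGroup M]
    [Module R M] : Prop :=
  KdimLE R α M ∧ ∀ β : Ordinal, β < α → ¬ KdimLE R β M

/-! If no `M / Rx` had Krull dimension `< α`, one could build a chain `M = W₀ > W₁ > ⋯` in which
each `W (j + 1)` is maximal (by noetherianity) among the `D ≤ W j` with `Kdim (W j / D) ≥ α`; such a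
chain contradicts `Kdim M ≤ α`. The chain never stops: as `Kdim M < Kdim R`, every element of `M`
has a non-zero annihilator, and faithfulness of the factors `W j / W (j + 1)` then produces `x` with
`W j ⊓ Rx ≰ W (j + 1)` for all `j < k`. By maximality each `M / (W j + Rx)` has dimension `< α`,
so `W k / (W k ⊓ Rx)` must have dimension `≥ α`. -/

open Submodule

theorem exists_seq_rel_succ_of_forall_prefix {ι : Type*} (P : ι → ι → Prop) (a : ι)
    (h : ∀ (k : ℕ) (w : ℕ → ι), w 0 = a → (∀ j < k, P (w j) (w (j + 1))) → ∃ b, P (w k) b) :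
    ∃ w : ℕ → ι, w 0 = a ∧ ∀ j, P (w j) (w (j + 1)) := by
  classical
  let next (c : ι) : ι := if hc : ∃ b, P c b then hc.choose else c
  have hnext {c : ι} (hc : ∃ b, P c b) : P c (next c) := by
    simpa only [next, dif_pos hc] using hc.choose_spec
  let w (k : ℕ) : ι := next^[k] a
  have hw_succ (k : ℕ) : w (k + 1) = next (w k) := Function.iterate_succ_apply' next k a
  have hw (k : ℕ) : ∃ b, P (w k) b := by
    induction k using Nat.strong_induction_on with
    | _ k ih => exact h k w rfl fun j hj => hw_succ j ▸ hnext (ih j hj)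
  exact ⟨w, rfl, fun j => hw_succ j ▸ hnext (hw j)⟩

section

variable {R E F : Type} [Ring R] [AddCommGroup E] [Module R E] [AddCommGroup F] [Module R F]

abbrev Subquotient (A B : Submodule R E) : Type := ↥A ⧸ B.comap A.subtype

namespace Subquotient

variable {f : E →ₗ[R] F} {A B : Submodule R E} {A' B' : Submodule R F}

def map (f : E →ₗ[R] F) (hA : A ≤ A'.comap f) (hB : B ≤ B'.comap f) :
    Subquotient A B →ₗ[R] Subquotient A' B' :=
  mapQ _ _ (f.restrict hA) fun _ hx => hB hx

theorem map_mk (hA : A ≤ A'.comap f) (hB : B ≤ B'.comap f) (x : A) :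
    map f hA hB (Submodule.Quotient.mk x) = Submodule.Quotient.mk ⟨f x, hA x.2⟩ :=
  rfl

theorem mk_eq_zero {x : A} : (Submodule.Quotient.mk x : Subquotient A B) = 0 ↔ (x : E) ∈ B :=
  Submodule.Quotient.mk_eq_zero _

theorem subsingleton_of_le (h : A ≤ B) : Subsingleton (Subquotient A B) := by
  rw [Submodule.Quotient.subsingleton_iff, comap_subtype_eq_top]
  exact h

theorem map_surjective (hA : A ≤ A'.comap f) (hB : B ≤ B'.comap f) (h : A' ≤ A.map f ⊔ B') :
    Function.Surjective (map f hA hB) := by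
  intro y
  obtain ⟨y, rfl⟩ := Submodule.mkQ_surjective _ y
  obtain ⟨_, ⟨x, hx, rfl⟩, b, hb, hxb⟩ := mem_sup.mp (h y.2)
  refine ⟨Submodule.Quotient.mk ⟨x, hx⟩, (Submodule.Quotient.eq _).mpr ?_⟩
  simpa [← hxb] using hb

theorem exact_map_comap_map {X Y : Type} [AddCommGroup X] [Module R X] [AddCommGroup Y]
    [Module R Y] {f : X →ₗ[R] E} {g : E →ₗ[R] Y} (hfg : Function.Exact f g) (hBA : B ≤ A) :
    Function.Exact (map f (A := A.comap f) (B := B.comap f) le_rfl le_rfl)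
      (map g (le_comap_map g A) (le_comap_map g B)) := by
  intro y
  obtain ⟨a, rfl⟩ := Submodule.mkQ_surjective _ y
  rw [mkQ_apply, map_mk, mk_eq_zero]
  constructor
  · rintro ⟨b, hb, hba⟩
    obtain ⟨x, hx⟩ := (hfg (a - b)).mp (by rw [map_sub, hba, sub_self])
    refine ⟨Submodule.Quotient.mk ⟨x, by simpa [hx] using A.sub_mem a.2 (hBA hb)⟩,
      (Submodule.Quotient.eq _).mpr ?_⟩
    simpa [hx] using B.neg_mem hb
  · rintro ⟨x, hx⟩
    obtain ⟨x, rfl⟩ := Submodule.mkQ_surjective _ x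
    rw [mkQ_apply, map_mk, Submodule.Quotient.eq] at hx
    exact ⟨(a : E) - f x, by simpa using B.neg_mem hx, by simp [hfg.apply_apply_eq_zero]⟩

end Subquotient

end

section KrullDimension

variable {R : Type} [Ring R] {X Y Q : Type} [AddCommGroup X] [Module R X] [AddCommGroup Y]
  [Module R Y] [AddCommGroup Q] [Module R Q]

/-- `Kdim X < α`, where `Kdim 0 = -1`. -/
def KdimLT (R : Type) [Ring R] (α : Ordinal) (X : Type) [AddCommGroup X] [Module R X] : Prop :=
  Subsingleton X ∨ ∃ β : Ordinal, ∃ _ : β < α, KdimLE R β X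

theorem kdimLE_iff {α : Ordinal} : KdimLE R α X ↔ ∀ f : ℕ → Submodule R X, Antitone f →
    {i | ¬ KdimLT R α (Subquotient (f i) (f (i + 1)))}.Finite := by
  rw [KdimLE]
  rfl

theorem kdimLT_iff {α : Ordinal} :
    KdimLT R α X ↔ Subsingleton X ∨ ∃ β : Ordinal, β < α ∧ KdimLE R β X := by
  simp only [KdimLT, exists_prop]

theorem kdimLE_of_subsingleton [Subsingleton X] (α : Ordinal) : KdimLE R α X :=
  kdimLE_iff.mpr fun _ _ => Set.finite_empty.subset fun _ hi => hi (Or.inl inferInstance)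

theorem KdimLE.mono {α β : Ordinal} (hαβ : α ≤ β) (h : KdimLE R α X) : KdimLE R β X := by
  rw [kdimLE_iff] at h ⊢
  refine fun f hf => (h f hf).subset fun i hi hsmall => hi ?_
  rcases hsmall with hsub | ⟨γ, hγ, hk⟩
  exacts [Or.inl hsub, Or.inr ⟨γ, hγ.trans_le hαβ, hk⟩]

theorem KdimLT.exists_common_kdimLE {α : Ordinal} (hX : KdimLT R α X) (hY : KdimLT R α Y) :
    (Subsingleton X ∧ Subsingleton Y) ∨ ∃ γ < α, KdimLE R γ X ∧ KdimLE R γ Y := by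
  rcases hX with hX | ⟨γ, hγ, hXγ⟩ <;> rcases hY with hY | ⟨δ, hδ, hYδ⟩
  · exact Or.inl ⟨hX, hY⟩
  · exact Or.inr ⟨δ, hδ, kdimLE_of_subsingleton δ, hYδ⟩
  · exact Or.inr ⟨γ, hγ, hXγ, kdimLE_of_subsingleton γ⟩
  · exact Or.inr ⟨max γ δ, max_lt hγ hδ, hXγ.mono (le_max_left γ δ), hYδ.mono (le_max_right γ δ)⟩

theorem Function.Exact.subsingleton {f : X →ₗ[R] Q} {g : Q →ₗ[R] Y} (hfg : Function.Exact f g)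
    [Subsingleton X] [Subsingleton Y] : Subsingleton Q where
  allEq a b := by
    obtain ⟨x, hx⟩ := (hfg (a - b)).mp (Subsingleton.elim _ _)
    rw [← sub_eq_zero, ← hx, Subsingleton.elim x 0, map_zero]

theorem KdimLT.of_exact_of_forall_lt {α : Ordinal} {f : X →ₗ[R] Q} {g : Q →ₗ[R] Y}
    (hfg : Function.Exact f g)
    (H : ∀ γ < α, KdimLE R γ X → KdimLE R γ Y → KdimLE R γ Q)
    (hX : KdimLT R α X) (hY : KdimLT R α Y) : KdimLT R α Q := by
  rcases hX.exists_common_kdimLE hY with ⟨_, _⟩ | ⟨γ, hγ, hXγ, hYγ⟩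
  · exact Or.inl hfg.subsingleton
  · exact Or.inr ⟨γ, hγ, H γ hγ hXγ hYγ⟩

/-- `Q` is an extension of a quotient of `X` by a submodule of `Y`. -/
theorem KdimLE.of_exact {X Q Y : Type} [AddCommGroup X] [Module R X] [AddCommGroup Q]
    [Module R Q] [AddCommGroup Y] [Module R Y] {α : Ordinal} {f : X →ₗ[R] Q} {g : Q →ₗ[R] Y}
    (hfg : Function.Exact f g)
    (hX : KdimLE R α X) (hY : KdimLE R α Y) : KdimLE R α Q := by
  rw [kdimLE_iff] at hX hY ⊢
  intro q hq
  refine ((hX (fun i => (q i).comap f) fun i j hij => comap_mono (hq hij)).union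
    (hY (fun i => (q i).map g) fun i j hij => map_mono (hq hij))).subset fun i hi => ?_
  by_contra hsmall
  rw [Set.mem_union, Set.mem_ofPred_eq, Set.mem_ofPred_eq, not_or, not_not, not_not] at hsmall
  have hexact := Subquotient.exact_map_comap_map hfg (hq i.le_succ)
  exact hi (KdimLT.of_exact_of_forall_lt hexact (fun _ _ => KdimLE.of_exact hexact)
    hsmall.1 hsmall.2)
termination_by α

theorem KdimLT.of_exact {α : Ordinal} {f : X →ₗ[R] Q} {g : Q →ₗ[R] Y} (hfg : Function.Exact f g)
    (hX : KdimLT R α X) (hY : KdimLT R α Y) : KdimLT R α Q :=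
  of_exact_of_forall_lt hfg (fun _ _ => KdimLE.of_exact hfg) hX hY

theorem KdimLE.of_injective {α : Ordinal} {f : X →ₗ[R] Y} (hf : Function.Injective f)
    (hY : KdimLE R α Y) : KdimLE R α X :=
  of_exact ((LinearMap.exact_zero_iff_injective PUnit f).mpr hf) (kdimLE_of_subsingleton α) hY

theorem KdimLT.of_surjective {α : Ordinal} {f : X →ₗ[R] Y} (hf : Function.Surjective f)
    (hX : KdimLT R α X) : KdimLT R α Y :=
  of_exact ((LinearMap.exact_zero_iff_surjective PUnit f).mpr hf) hX (Or.inl inferInstance)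

end KrullDimension

section Stafford

variable {R M : Type} [Ring R] [AddCommGroup M] [Module R M] {α : Ordinal}

theorem KdimLT.subquotient_of_le_sup {A B A' B' : Submodule R M} (hA : A ≤ A') (hB : B ≤ B')
    (h : A' ≤ A ⊔ B') (hAB : KdimLT R α (Subquotient A B)) : KdimLT R α (Subquotient A' B') :=
  hAB.of_surjective (Subquotient.map_surjective (f := LinearMap.id) hA hB (by rwa [map_id]))

theorem KdimLT.quotient_of_le {A B : Submodule R M} (hBA : B ≤ A)
    (hAB : KdimLT R α (Subquotient A B)) (hA : KdimLT R α (M ⧸ A)) : KdimLT R α (M ⧸ B) := by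
  refine hAB.of_exact (f := mapQ _ B A.subtype le_rfl) (g := factor hBA) ?_ hA
  rw [LinearMap.exact_iff, ker_mapQ, range_mapQ, range_subtype, comap_id]

theorem exists_ne_zero_smul_eq_zero (hM : KdimLE R α M) (hR : ¬ KdimLE R α R) (x : M) :
    ∃ r : R, r ≠ 0 ∧ r • x = 0 := by
  by_contra! h
  refine hR (hM.of_injective (f := LinearMap.toSpanSingleton R M x) ?_)
  exact (injective_iff_map_eq_zero _).mpr fun r hr => by_contra fun hr0 => h r hr0 hr

theorem exists_smul_notMem_of_lt
    (hcf : ∀ N : Submodule R M, N ≠ ⊤ →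
      ∀ P : Submodule R (M ⧸ N), P ≠ ⊥ → ∀ r : R, (∀ x ∈ P, r • x = 0) → r = 0)
    {A B : Submodule R M} (hBA : B < A) {r : R} (hr : r ≠ 0) : ∃ δ ∈ A, r • δ ∉ B := by
  by_contra! hAB
  refine hr (hcf B hBA.ne_top (A.map B.mkQ) ?_ r ?_)
  · rw [ne_eq, ← le_bot_iff, map_le_iff_le_comap, comap_bot, ker_mkQ]
    exact hBA.not_ge
  · rintro _ ⟨δ, hδ, rfl⟩
    rw [mkQ_apply, ← Submodule.Quotient.mk_smul, Submodule.Quotient.mk_eq_zero]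
    exact hAB δ hδ

theorem inf_span_singleton_le_of_inf_span_add_le {A B : Submodule R M} (hBA : B ≤ A) {x δ : M}
    (hδ : δ ∈ B) (h : A ⊓ span R {x + δ} ≤ B) : A ⊓ span R {x} ≤ B := by
  rintro _ ⟨hA, hx⟩
  obtain ⟨s, rfl⟩ := mem_span_singleton.mp hx
  have hsδ : s • δ ∈ B := B.smul_mem s hδ
  have hsum : s • (x + δ) ∈ B :=
    h ⟨smul_add s x δ ▸ A.add_mem hA (hBA hsδ), smul_mem _ s (mem_span_singleton_self _)⟩
  simpa [smul_add] using B.sub_mem hsum hsδ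

/-- Given `r ≠ 0` with `r • x = 0`, adding to `x` some `δ ∈ W k` with `r • δ ∉ W (k + 1)`
repairs level `k` without spoiling the levels above. -/
theorem exists_forall_inf_span_singleton_not_le {W : ℕ → Submodule R M} {k : ℕ}
    (hW : AntitoneOn W (Set.Iic k))
    (hfaith : ∀ j < k, ∀ r : R, r ≠ 0 → ∃ δ ∈ W j, r • δ ∉ W (j + 1))
    (htors : ∀ x : M, ∃ r : R, r ≠ 0 ∧ r • x = 0) :
    ∃ x : M, ∀ j < k, ¬ W j ⊓ span R {x} ≤ W (j + 1) := by
  induction k with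
  | zero => exact ⟨0, fun j hj => absurd hj (Nat.not_lt_zero j)⟩
  | succ k ih =>
    obtain ⟨x, hx⟩ := ih (hW.mono (Set.Iic_subset_Iic.mpr k.le_succ))
      fun j hj => hfaith j (hj.trans k.lt_succ_self)
    obtain ⟨r, hr, hrx⟩ := htors x
    obtain ⟨δ, hδ, hrδ⟩ := hfaith k k.lt_succ_self r hr
    refine ⟨x + δ, fun j hj => ?_⟩
    rcases Nat.lt_succ_iff_lt_or_eq.mp hj with hj | rfl
    · have hWk : W k ≤ W (j + 1) :=
        hW (Set.mem_Iic.mpr (by omega)) (Set.mem_Iic.mpr k.le_succ) hj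
      exact fun h => hx j hj (inf_span_singleton_le_of_inf_span_add_le
        (hW (Set.mem_Iic.mpr (by omega)) (Set.mem_Iic.mpr (by omega)) j.le_succ) (hWk hδ) h)
    · refine fun h => hrδ ?_
      have hmem : r • (x + δ) ∈ W j ⊓ span R {x + δ} :=
        ⟨by simpa [smul_add, hrx] using (W j).smul_mem r hδ,
          smul_mem _ r (mem_span_singleton_self _)⟩
      simpa [smul_add, hrx] using h hmem

def LargeBelow (R : Type) [Ring R] {M : Type} [AddCommGroup M] [Module R M] (α : Ordinal)
    (C D : Submodule R M) : Prop :=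
  D ≤ C ∧ ¬ KdimLT R α (Subquotient C D)

theorem LargeBelow.lt {C D : Submodule R M} (h : LargeBelow R α C D) : D < C :=
  h.1.lt_of_ne fun hDC => h.2 (Or.inl (Subquotient.subsingleton_of_le hDC.ge))

theorem not_kdimLE_of_forall_largeBelow {W : ℕ → Submodule R M}
    (hW : ∀ j, LargeBelow R α (W j) (W (j + 1))) : ¬ KdimLE R α M := by
  rw [kdimLE_iff]
  intro h
  exact Set.infinite_univ ((h W (antitone_nat_of_succ_le fun j => (hW j).1)).subset
    fun j _ => (hW j).2)

variable {W : ℕ → Submodule R M} {k : ℕ}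

theorem kdimLT_quotient_sup_span_singleton (hW0 : W 0 = ⊤)
    (hmax : ∀ j < k, Maximal (LargeBelow R α (W j)) (W (j + 1))) {x : M}
    (hx : ∀ j < k, ¬ W j ⊓ span R {x} ≤ W (j + 1)) :
    ∀ j ≤ k, KdimLT R α (M ⧸ (W j ⊔ span R {x})) := by
  intro j
  induction j with
  | zero =>
    intro _
    rw [hW0, top_sup_eq]
    exact Or.inl inferInstance
  | succ j ih =>
    intro hj
    have hstep := hmax j hj
    have hfactor : KdimLT R α (Subquotient (W j) (W (j + 1) ⊔ W j ⊓ span R {x})) := by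
      by_contra hlarge
      exact hx j hj (le_sup_right.trans
        (hstep.2 ⟨sup_le hstep.1.1 inf_le_left, hlarge⟩ le_sup_left))
    exact (hfactor.subquotient_of_le_sup le_sup_left (sup_le_sup_left inf_le_right _)
      (sup_le_sup_left le_sup_right _)).quotient_of_le (sup_le_sup_right hstep.1.1 _)
      (ih (by omega))

theorem exists_largeBelow_of_maximal
    (hcf : ∀ N : Submodule R M, N ≠ ⊤ →
      ∀ P : Submodule R (M ⧸ N), P ≠ ⊥ → ∀ r : R, (∀ x ∈ P, r • x = 0) → r = 0)
    (htors : ∀ x : M, ∃ r : R, r ≠ 0 ∧ r • x = 0)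
    (hcyc : ∀ x : M, ¬ KdimLT R α (M ⧸ span R {x})) (hW0 : W 0 = ⊤)
    (hmax : ∀ j < k, Maximal (LargeBelow R α (W j)) (W (j + 1))) :
    ∃ D, LargeBelow R α (W k) D := by
  have hlt : ∀ j < k, W (j + 1) < W j := fun j hj => (hmax j hj).1.lt
  obtain ⟨x, hx⟩ := exists_forall_inf_span_singleton_not_le
    (strictAntiOn_Iic_of_succ_lt hlt).antitoneOn
    (fun j hj _ hr => exists_smul_notMem_of_lt hcf (hlt j hj) hr) htors
  refine ⟨W k ⊓ span R {x}, inf_le_left, fun hsmall => hcyc x ?_⟩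
  exact (hsmall.subquotient_of_le_sup le_sup_left inf_le_right le_rfl).quotient_of_le le_sup_right
    (kdimLT_quotient_sup_span_singleton hW0 hmax hx k le_rfl)

end Stafford

theorem stafford_cyclic_submodule_general (R : Type) [Ring R] [IsNoetherianRing R]
    (M : Type) [AddCommGroup M] [Module R M] [Module.Finite R M]
    (hcf : ∀ N : Submodule R M, N ≠ ⊤ →
      ∀ P : Submodule R (M ⧸ N), P ≠ ⊥ → ∀ r : R, (∀ x ∈ P, r • x = 0) → r = 0)
    (α β : Ordinal) (hM : HasKdim R α M) (hR : HasKdim R β R) (hlt : α < β) :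
    ∃ N : Submodule R M, (∃ x : M, N = Submodule.span R {x}) ∧
      (Subsingleton (M ⧸ N) ∨ ∃ γ : Ordinal, γ < α ∧ KdimLE R γ (M ⧸ N)) := by
  by_contra hcon
  have hcyc (x : M) : ¬ KdimLT R α (M ⧸ span R {x}) := fun hx =>
    hcon ⟨_, ⟨x, rfl⟩, kdimLT_iff.mp hx⟩
  have htors := exists_ne_zero_smul_eq_zero hM.1 (hR.2 α hlt)
  have : IsNoetherian R M := isNoetherian_of_isNoetherianRing_of_finite R M
  have hnext (k : ℕ) (W : ℕ → Submodule R M) (hW0 : W 0 = ⊤)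
      (hmax : ∀ j < k, Maximal (LargeBelow R α (W j)) (W (j + 1))) :
      ∃ D, Maximal (LargeBelow R α (W k)) D := by
    obtain ⟨D, hD⟩ := exists_largeBelow_of_maximal hcf htors hcyc hW0 hmax
    exact WellFoundedGT.exists_maximal inferInstance {D | LargeBelow R α (W k) D} ⟨D, hD⟩
  obtain ⟨W, -, hW⟩ :=
    exists_seq_rel_succ_of_forall_prefix (fun C => Maximal (LargeBelow R α C)) ⊤ hnext
  exact not_kdimLE_of_forall_largeBelow (fun j => (hW j).1) hM.1

/-- Stafford's lemma: if `R` is a left Noetherian ring and `M` a non-zero finitely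
generated completely faithful left `R`-module with `Kdim M < Kdim R`, then `M` contains
a cyclic submodule `N` with `Kdim (M/N) < Kdim M`. -/
theorem stafford_cyclic_submodule (R : Type) [Ring R] [IsNoetherianRing R]
    (M : Type) [AddCommGroup M] [Module R M] [Nontrivial M] [Module.Finite R M]
    (hcf : ∀ N : Submodule R M, N ≠ ⊤ →
      ∀ P : Submodule R (M ⧸ N), P ≠ ⊥ → ∀ r : R, (∀ x ∈ P, r • x = 0) → r = 0)
    (α β : Ordinal) (hM : HasKdim R α M) (hR : HasKdim R β R) (hlt : α < β) :
    ∃ N : Submodule R M, (∃ x : M, N = Submodule.span R {x}) ∧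
      (Subsingleton (M ⧸ N) ∨ ∃ γ : Ordinal, γ < α ∧ KdimLE R γ (M ⧸ N)) :=
  stafford_cyclic_submodule_general R M hcf α β hM hR hlt
end

section
/- Let R be a left Noetherian almost simple ring with left Krull dimension at least 1, and let dim be a Sylvester module rank function on R. If M is a finitely generated left R-module of finite length that is Z(R)-torsionfree (i.e., cm ≠ 0 for all non-zero c ∈ Z(R) and non-zero m ∈ M), then dim(M) = 0. -/
/-!
The annihilator of a simple quotient `M ⧸ N` of `M` is a two-sided ideal; if it were non-zero it
would contain a non-zero central `c`. Multiplication by `c` is injective on the torsionfree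
module `M`, hence surjective as `M` is Artinian, so `M = c • M ⊆ N`, which is absurd. Thus every
composition factor `S` of `M` is a faithful simple module. As `R` is not Artinian, `S` cannot be
finite-dimensional over the division ring `End R S` (else `R` would embed into a finite power of
`S`), so by Jacobson density every power `S ^ k` is cyclic, giving `k * dim S ≤ dim R = 1` for
all `k`. Hence `dim S = 0`, and `dim M = 0` by subadditivity along a composition series.
-/

def IsAlmostSimpleRing (R : Type*) [Ring R] : Prop :=
  ∀ I : TwoSidedIdeal R, I ≠ ⊥ → ∃ c : R, c ∈ I ∧ c ≠ 0 ∧ c ∈ Set.center R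

def IsCenterTorsionFree (R : Type*) [Ring R] (M : Type*) [AddCommGroup M] [Module R M] : Prop :=
  ∀ c ∈ Set.center R, c ≠ 0 → ∀ m : M, m ≠ 0 → c • m ≠ 0

theorem IsCenterTorsionFree.submodule {R : Type*} [Ring R] {M : Type*} [AddCommGroup M]
    [Module R M] (htf : IsCenterTorsionFree R M) (N : Submodule R M) :
    IsCenterTorsionFree R N := fun c hc hc0 m hm hcm ↦
  htf c hc hc0 m (by simpa using hm) congr(Subtype.val $hcm)

theorem kdimLE_zero_of_isArtinian (R : Type) [Ring R] (M : Type) [AddCommGroup M] [Module R M]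
    [IsArtinian R M] : KdimLE R 0 M := by
  rw [KdimLE]
  intro f hf
  obtain ⟨n, hn⟩ := IsArtinian.monotone_stabilizes ⟨f, fun _ _ h ↦ hf h⟩
  refine (Set.finite_Iio n).subset fun i hi ↦
    Set.mem_Iio.mpr (not_le.mp fun hni ↦ hi (Or.inl ?_))
  rw [Submodule.Quotient.subsingleton_iff, Submodule.comap_subtype_eq_top]
  exact (show f i = f (i + 1) from (hn i hni).symm.trans (hn (i + 1) (hni.trans i.le_succ))).le

open Module (End)

section SimpleModule

variable {R : Type*} [Ring R] {S : Type*} [AddCommGroup S] [Module R S] [IsSimpleModule R S]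

theorem IsSimpleModule.pi_toSpanSingleton_surjective {ι : Type*} [Finite ι] {s : ι → S}
    (hs : LinearIndependent (End R S) s) :
    Function.Surjective (LinearMap.pi fun i ↦ LinearMap.toSpanSingleton R S (s i)) := by
  classical
  cases nonempty_fintype ι
  intro y
  obtain ⟨g, hg⟩ := LinearMap.exists_leftInverse_of_injective
    (Finsupp.linearCombination (End R S) s) (LinearMap.ker_eq_bot.mpr hs)
  have hgs : ∀ i, g (s i) = Finsupp.single i 1 := fun i ↦ by
    simpa using congr($hg (Finsupp.single i 1))
  obtain ⟨r, hr⟩ := jacobson_density ((Finsupp.linearCombination (End R S) y).comp g)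
    (Finset.univ.image s)
  exact ⟨r, funext fun i ↦ by simpa [hgs] using (hr (s i) (by simp)).symm⟩

theorem IsSimpleModule.isArtinianRing_of_faithfulSMul [FaithfulSMul R S]
    [Module.Finite (End R S) S] : IsArtinianRing R := by
  obtain ⟨n, s, hs⟩ := Module.Finite.exists_fin (R := End R S) (M := S)
  refine isArtinian_of_injective (LinearMap.pi fun i ↦ LinearMap.toSpanSingleton R S (s i)) ?_
  rw [← LinearMap.ker_eq_bot, Submodule.eq_bot_iff]
  intro r hr
  have hkill : Submodule.span (End R S) (Set.range s) ≤
      LinearMap.ker (Module.toModuleEnd (End R S) (S := R) S r) := by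
    rw [Submodule.span_le]
    rintro _ ⟨i, rfl⟩
    exact congr_fun (LinearMap.mem_ker.mp hr) i
  rw [hs] at hkill
  refine FaithfulSMul.eq_of_smul_eq_smul (M := R) (α := S) fun x ↦ ?_
  simpa using hkill (Submodule.mem_top (x := x))

theorem IsSimpleModule.exists_linearIndependent_of_not_isArtinianRing [FaithfulSMul R S]
    (hR : ¬ IsArtinianRing R) (k : ℕ) : ∃ s : Fin k → S, LinearIndependent (End R S) s := by
  classical
  refine exists_linearIndependent_of_le_rank ?_
  have hinf : ¬ Module.rank (End R S) S < Cardinal.aleph0 := fun h ↦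
    hR (have := Module.rank_lt_aleph0_iff.mp h; isArtinianRing_of_faithfulSMul (S := S))
  exact (Cardinal.natCast_lt_aleph0 (n := k)).le.trans (not_lt.mp hinf)

end SimpleModule

theorem faithfulSMul_quotient_of_isArtinian {R : Type*} [Ring R]
    (halmost : IsAlmostSimpleRing R) {M : Type*} [AddCommGroup M] [Module R M] [IsArtinian R M]
    (htf : IsCenterTorsionFree R M)
    {N : Submodule R M} (hN : N ≠ ⊤) : FaithfulSMul R (M ⧸ N) := by
  rw [← Module.annihilator_eq_bot]
  by_contra hann
  obtain ⟨c, hcann, hc0, hcZ⟩ := halmost (Module.annihilator R (M ⧸ N)).toTwoSided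
    fun h ↦ hann (by rw [← Ideal.asIdeal_toTwoSided (Module.annihilator R _), h]; rfl)
  let mulC : M →ₗ[R] M :=
    { toFun := (c • ·)
      map_add' := smul_add c
      map_smul' := fun r m ↦ by rw [RingHom.id_apply, smul_smul, smul_smul, (hcZ.comm r).eq] }
  have hsurj : Function.Surjective mulC :=
    IsArtinian.surjective_of_injective_endomorphism mulC fun a b hab ↦
      sub_eq_zero.mp <| by_contra fun hab' ↦
        htf c hcZ hc0 _ hab' (by rw [smul_sub]; exact sub_eq_zero.mpr hab)
  refine hN (eq_top_iff.mpr fun x _ ↦ ?_)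
  obtain ⟨m, rfl⟩ := hsurj x
  rw [← Submodule.Quotient.mk_eq_zero]
  exact Module.mem_annihilator.mp (Ideal.mem_toTwoSided.mp hcann) (Submodule.Quotient.mk m)

-- Over a left Noetherian ring finitely generated modules are finitely presented, so the axioms
-- of a Sylvester module rank function apply to them.
attribute [local instance] Module.finitePresentation_of_finite

namespace SylvesterModuleRank

variable {R : Type} [Ring R] (dim : SylvesterModuleRank R)

theorem d_eq_zero_of_subsingleton (M : Type) [AddCommGroup M] [Module R M] [Subsingleton M] :
    dim.d M = 0 := by
  rw [dim.d_congr M PUnit inferInstance (LinearEquiv.ofSubsingleton _ _), dim.d_bot]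

variable [IsNoetherianRing R]

theorem d_pi_fin (M : Type) [AddCommGroup M] [Module R M] [Module.Finite R M] (k : ℕ) :
    dim.d (Fin k → M) = k * dim.d M := by
  induction k with
  | zero => simp [dim.d_eq_zero_of_subsingleton]
  | succ k ih =>
    rw [← dim.d_congr _ _ inferInstance (Fin.consLinearEquiv R fun _ : Fin (k + 1) ↦ M),
      dim.d_add _ _ inferInstance inferInstance, ih]
    push_cast
    ring

theorem d_le_of_surjective_s14 {M N : Type} [AddCommGroup M] [Module R M] [Module.Finite R M]
    [AddCommGroup N] [Module R N] (f : M →ₗ[R] N) (hf : Function.Surjective f) :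
    dim.d N ≤ dim.d M :=
  have : Module.Finite R N := .of_surjective f hf
  (dim.d_exact _ _ _ inferInstance inferInstance inferInstance _ f
    f.exact_subtype_ker_map hf).1

theorem d_le_add_quotient {M : Type} [AddCommGroup M] [Module R M] [Module.Finite R M]
    (N : Submodule R M) : dim.d M ≤ dim.d N + dim.d (M ⧸ N) :=
  (dim.d_exact _ _ _ inferInstance inferInstance inferInstance _ _
    (LinearMap.exact_subtype_mkQ N) N.mkQ_surjective).2

theorem d_eq_zero_of_forall_surjective_pi {M : Type} [AddCommGroup M] [Module R M]
    [Module.Finite R M] (h : ∀ k : ℕ, ∃ f : R →ₗ[R] (Fin k → M), Function.Surjective f) :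
    dim.d M = 0 := by
  have hle : ∀ k : ℕ, k * dim.d M ≤ 1 := fun k ↦ by
    obtain ⟨f, hf⟩ := h k
    rw [← dim.d_pi_fin, ← dim.d_self]
    exact dim.d_le_of_surjective_s14 f hf
  refine le_antisymm (not_lt.mp fun hpos ↦ ?_) (dim.d_nonneg M inferInstance)
  obtain ⟨k, hk⟩ := exists_nat_gt (dim.d M)⁻¹
  exact (hle k).not_gt ((inv_lt_iff_one_lt_mul₀ hpos).mp hk)

theorem d_eq_zero_of_isSimpleModule (hR : ¬ IsArtinianRing R) (S : Type) [AddCommGroup S]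
    [Module R S] [IsSimpleModule R S] [FaithfulSMul R S] : dim.d S = 0 :=
  dim.d_eq_zero_of_forall_surjective_pi fun k ↦
    have ⟨_, hs⟩ := IsSimpleModule.exists_linearIndependent_of_not_isArtinianRing (S := S) hR k
    ⟨_, IsSimpleModule.pi_toSpanSingleton_surjective hs⟩

theorem d_eq_zero_of_isFiniteLength
    (halmost : IsAlmostSimpleRing R) (hR : ¬ IsArtinianRing R) {M : Type} [AddCommGroup M]
    [Module R M] (hM : IsFiniteLength R M) (htf : IsCenterTorsionFree R M) : dim.d M = 0 := by
  induction hM with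
  | of_subsingleton => exact dim.d_eq_zero_of_subsingleton _
  | @of_simple_quotient M _ _ N _ hN ih =>
    obtain ⟨_, _⟩ := isFiniteLength_iff_isNoetherian_isArtinian.mp (hN.of_simple_quotient)
    have hNtop : N ≠ ⊤ := Submodule.Quotient.nontrivial_iff.mp (IsSimpleModule.nontrivial R _)
    have := faithfulSMul_quotient_of_isArtinian halmost htf hNtop
    linarith [ih (htf.submodule N), dim.d_le_add_quotient N,
      dim.d_eq_zero_of_isSimpleModule hR (M ⧸ N), dim.d_nonneg M inferInstance]

end SylvesterModuleRank

theorem almost_simple_torsionfree_rank_zero_general (R : Type) [Ring R] [IsNoetherianRing R]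
    (halmost : ∀ I : TwoSidedIdeal R, I ≠ ⊥ →
      ∃ c : R, c ∈ I ∧ c ≠ 0 ∧ c ∈ Set.center R)
    (hkdim : ¬ KdimLE R 0 R)
    (dim : SylvesterModuleRank R)
    (M : Type) [AddCommGroup M] [Module R M]
    (hlen : IsFiniteLength R M)
    (htf : ∀ c ∈ Set.center R, c ≠ 0 → ∀ m : M, m ≠ 0 → c • m ≠ 0) :
    dim.d M = 0 := by
  have hR : ¬ IsArtinianRing R := fun _ ↦ hkdim (kdimLE_zero_of_isArtinian R R)
  exact dim.d_eq_zero_of_isFiniteLength halmost hR hlen htf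

/-- Let `R` be a left Noetherian almost simple ring (every non-zero two-sided ideal
contains a non-zero central element) with left Krull dimension at least `1`, and let
`dim` be a Sylvester module rank function on `R`. If `M` is a finitely generated
`Z(R)`-torsionfree left `R`-module of finite length, then `dim M = 0`. -/
theorem almost_simple_torsionfree_rank_zero (R : Type) [Ring R] [IsNoetherianRing R]
    (halmost : ∀ I : TwoSidedIdeal R, I ≠ ⊥ →
      ∃ c : R, c ∈ I ∧ c ≠ 0 ∧ c ∈ Set.center R)
    (hkdim : ¬ KdimLE R 0 R)
    (dim : SylvesterModuleRank R)
    (M : Type) [AddCommGroup M] [Module R M] [Module.Finite R M]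
    (hlen : IsFiniteLength R M)
    (htf : ∀ c ∈ Set.center R, c ≠ 0 → ∀ m : M, m ≠ 0 → c • m ≠ 0) :
    dim.d M = 0 :=
  almost_simple_torsionfree_rank_zero_general R halmost hkdim dim M hlen htf
end

section
/- Let D be a division ring, τ an automorphism of D of infinite inner order (no positive power of τ is an inner automorphism), and R = D[t^{±1}; τ] the skew Laurent polynomial ring. Then the center of R equals K^τ, the subfield of elements of K = Z(D) fixed by τ. -/
/-!
Write a central element as `z = Σ φ(aᵢ) tⁱ`. Commuting `z` past `φ d` and comparing coefficients
gives `aᵢ · τⁱ(d) = d · aᵢ` for every `d`, so a nonzero `aᵢ` with `i ≠ 0` would exhibit `τⁱ` as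
conjugation by `aᵢ`. Hence `z = φ(a₀)` with `a₀` central, and commuting `z` with `t` forces
`τ(a₀) = a₀`. Conversely, such a `φ(c)` commutes with every monomial `φ(a) tⁱ`, since `τⁱ` fixes `c`.
-/

namespace SkewLaurent

section Semiring

variable {D R : Type*} [Semiring D] [Semiring R]

def sumMonomials (φ : D →+* R) (t : Rˣ) (a : ℤ →₀ D) : R :=
  a.sum fun i c => φ c * ((t ^ i : Rˣ) : R)

def IsInner (σ : RingAut D) : Prop :=
  ∃ u : Dˣ, ∀ d, σ d = (u⁻¹ : Dˣ) * d * u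

theorem IsInner.inv {σ : RingAut D} (h : IsInner σ) : IsInner σ⁻¹ := by
  obtain ⟨u, hu⟩ := h
  refine ⟨u⁻¹, fun d => ?_⟩
  have hd := hu (σ⁻¹ d)
  rw [show σ (σ⁻¹ d) = d from σ.apply_symm_apply d] at hd
  calc σ⁻¹ d = u * (u⁻¹ * σ⁻¹ d * u) * u⁻¹ := by simp [mul_assoc]
    _ = _ := by rw [← hd, inv_inv]

theorem not_isInner_zpow {τ : RingAut D} (hinf : ∀ m : ℕ, 0 < m → ¬ IsInner (τ ^ m)) {i : ℤ}
    (hi : i ≠ 0) : ¬ IsInner (τ ^ i) := by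
  have hnat := hinf _ (Int.natAbs_pos.mpr hi)
  rcases Int.natAbs_eq i with h | h <;> rw [h]
  · rwa [zpow_natCast]
  · rw [zpow_neg, zpow_natCast]
    exact fun h => hnat (by simpa using h.inv)

variable (φ : D →+* R) (t : Rˣ)

theorem sumMonomials_single (i : ℤ) (c : D) :
    sumMonomials φ t (Finsupp.single i c) = φ c * ((t ^ i : Rˣ) : R) :=
  Finsupp.sum_single_index (by simp)

theorem sumMonomials_injective (hbasis : ∀ x : R, ∃! a : ℤ →₀ D, x = sumMonomials φ t a) :
    Function.Injective (sumMonomials φ t) :=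
  fun _ _ hab => (hbasis _).unique rfl hab

theorem injective_of_sumMonomials_injective (h : Function.Injective (sumMonomials φ t)) :
    Function.Injective φ :=
  fun c c' hcc' => Finsupp.single_injective 0 (h (by simp [sumMonomials_single, hcc']))

def intertwiners : Subgroup (Rˣ × RingAut D) where
  carrier := {p | ∀ d, (p.1 : R) * φ d = φ (p.2 d) * p.1}
  mul_mem' {p q} hp hq d := by
    simp only [Prod.fst_mul, Prod.snd_mul, Units.val_mul, RingAut.mul_apply]
    rw [mul_assoc, hq, ← mul_assoc, hp, mul_assoc]
  one_mem' d := by simp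
  inv_mem' {p} hp d := by
    have hd := hp (p.2⁻¹ d)
    rw [show p.2 (p.2⁻¹ d) = d from p.2.apply_symm_apply d] at hd
    exact SemiconjBy.units_inv_symm_left hd

variable {τ : RingAut D} (hcomm : ∀ d : D, (t : R) * φ d = φ (τ d) * (t : R))
include hcomm

theorem units_zpow_mul_map (i : ℤ) (d : D) :
    ((t ^ i : Rˣ) : R) * φ d = φ ((τ ^ i) d) * ((t ^ i : Rˣ) : R) :=
  zpow_mem (show (t, τ) ∈ intertwiners φ from hcomm) i d

theorem coeff_mul_zpow_apply_eq {a : ℤ →₀ D} {d : D} (hinj : Function.Injective (sumMonomials φ t))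
    (h : sumMonomials φ t a * φ d = φ d * sumMonomials φ t a) (i : ℤ) :
    a i * (τ ^ i) d = d * a i := by
  let b := Finsupp.onFinset a.support (fun j => a j * (τ ^ j) d)
    (fun j hj => Finsupp.mem_support_iff.mpr fun h0 => hj (by simp [h0]))
  have hb : sumMonomials φ t b = sumMonomials φ t a * φ d := by
    rw [sumMonomials, Finsupp.onFinset_sum _ (fun _ => by simp), sumMonomials, Finsupp.sum,
      Finset.sum_mul]
    refine Finset.sum_congr rfl fun j _ => ?_
    rw [map_mul, mul_assoc, mul_assoc, units_zpow_mul_map φ t hcomm]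
  have hc : sumMonomials φ t (a.mapRange (d * ·) (mul_zero d)) = φ d * sumMonomials φ t a := by
    rw [sumMonomials, Finsupp.sum_mapRange_index (by simp), sumMonomials, Finsupp.mul_sum]
    simp only [map_mul, mul_assoc]
  simpa [b] using DFunLike.congr_fun (hinj (hb.trans (h.trans hc.symm))) i

theorem map_mem_center (hspan : ∀ x : R, ∃ a : ℤ →₀ D, x = sumMonomials φ t a) {c : D}
    (hc : c ∈ Set.center D) (hfix : τ c = c) : φ c ∈ Set.center R := by
  refine Semigroup.mem_center_iff.mpr fun x => ?_
  obtain ⟨a, rfl⟩ := hspan x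
  have hfix_zpow (i : ℤ) : (τ ^ i) c = c := MulAction.mem_fixedBy_zpow (α := D) (g := τ) hfix i
  rw [sumMonomials, Finsupp.sum_mul, Finsupp.mul_sum]
  refine Finsupp.sum_congr fun i _ => ?_
  rw [mul_assoc, units_zpow_mul_map φ t hcomm, hfix_zpow, ← mul_assoc, ← map_mul,
    Semigroup.mem_center_iff.mp hc, map_mul, mul_assoc]

end Semiring

section DivisionRing

variable {D R : Type*} [DivisionRing D] [Ring R]

theorem isInner_of_mul_eq_mul {σ : RingAut D} {c : D} (hc : c ≠ 0) (h : ∀ d, c * σ d = d * c) :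
    IsInner σ :=
  ⟨Units.mk0 c hc, fun d => by simp [mul_assoc, ← h d, hc]⟩

variable (φ : D →+* R) (t : Rˣ) {τ : RingAut D}
  (hcomm : ∀ d : D, (t : R) * φ d = φ (τ d) * (t : R))
  (hbasis : ∀ x : R, ∃! a : ℤ →₀ D, x = sumMonomials φ t a)
include hcomm hbasis

theorem exists_eq_map_of_mem_center (hinf : ∀ m : ℕ, 0 < m → ¬ IsInner (τ ^ m)) {z : R}
    (hcen : z ∈ Set.center R) : ∃ c ∈ {c : D | c ∈ Set.center D ∧ τ c = c}, φ c = z := by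
  obtain ⟨a, rfl, -⟩ := hbasis z
  have hinj := sumMonomials_injective φ t hbasis
  have hcoeff (d : D) (i : ℤ) : a i * (τ ^ i) d = d * a i :=
    coeff_mul_zpow_apply_eq φ t hcomm hinj (Semigroup.mem_center_iff.mp hcen (φ d)).symm i
  have ha : a = Finsupp.single 0 (a 0) := by
    ext i
    rcases eq_or_ne i 0 with rfl | hi
    · simp
    rw [Finsupp.single_eq_of_ne hi]
    by_contra hai
    exact not_isInner_zpow hinf hi (isInner_of_mul_eq_mul hai (hcoeff · i))
  have hz : sumMonomials φ t a = φ (a 0) := by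
    rw [ha, sumMonomials_single]
    simp
  have hcen0 : a 0 ∈ Set.center D :=
    Semigroup.mem_center_iff.mpr fun d => by simpa using (hcoeff d 0).symm
  refine ⟨a 0, ⟨hcen0, ?_⟩, hz.symm⟩
  have ht := Semigroup.mem_center_iff.mp hcen t
  rw [hz, hcomm] at ht
  exact injective_of_sumMonomials_injective φ t hinj ((Units.mul_left_inj t).mp ht)

end DivisionRing

end SkewLaurent

open SkewLaurent in
/-- Let `D` be a division ring and `τ` an automorphism of `D` of infinite inner order.
The skew Laurent polynomial ring `R = D[t^{±1}; τ]` is axiomatized by a ring embedding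
`φ : D → R` and a unit `t` with `t · φ d = φ (τ d) · t`, such that every element of `R`
is uniquely a finite sum `Σ φ (a i) * t ^ i` over `i : ℤ`. Then the center of `R` is
`φ '' K^τ`, where `K^τ` is the set of `τ`-fixed elements of the center of `D`. -/
theorem center_skewLaurent_of_infinite_inner_order
    (D R : Type) [DivisionRing D] [Ring R] (τ : RingAut D) (φ : D →+* R) (t : Rˣ)
    (hcomm : ∀ d : D, (t : R) * φ d = φ (τ d) * (t : R))
    (hbasis : ∀ x : R, ∃! a : ℤ →₀ D,
      x = a.sum fun i c => φ c * ((t ^ i : Rˣ) : R))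
    (hinf : ∀ m : ℕ, 0 < m → ¬ ∃ u : Dˣ, ∀ d : D, (τ ^ m) d = (u⁻¹ : Dˣ) * d * u) :
    Set.center R = φ '' {c : D | c ∈ Set.center D ∧ τ c = c} := by
  ext z
  constructor
  · exact exists_eq_map_of_mem_center φ t hcomm hbasis hinf
  · rintro ⟨c, ⟨hc, hfix⟩, rfl⟩
    exact map_mem_center φ t hcomm (fun x => (hbasis x).exists) hc hfix
end

section
/- Let D be a division ring, τ an automorphism of D, R = D[t^{±1}; τ], and let I be a non-zero proper two-sided ideal of R. Then there exists a non-constant polynomial p ∈ Z(R) ∩ D[t;τ] with non-zero constant term such that I = Rp; moreover I is a maximal two-sided ideal if and only if p is irreducible as an element of the commutative ring S = Z(R) ∩ D[t;τ]. -/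
/-!
Write `deg x` and `ord x` for the largest and smallest exponents of `t` occurring in `x ∈ R`.
Comparing extreme coefficients shows that both are additive on products, so `R` is a domain
and the width `deg - ord` is additive. Choose a nonzero `p ∈ I` of minimal width, normalised
to `ord p = 0` with constant coefficient `1`. Its commutators with `φ d` and with `t` lie in
`I` but have smaller width, so they vanish and `p` is central; long division by `p`
(cancelling top coefficients with left monomial multiples of `p`) gives `I = R p`.
An ideal `J` with `I < J < R` is `R p'` for such a normalised `p'`, and then `p = s p'` with
`s` central and non-constant, a factorisation in `S`. Conversely, if `p = r q` in `S` with
`r, q` non-constant, then `R r` lies strictly between `I` and `R`, by additivity of width.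
-/

theorem mem_center_of_mul_mem_center {R : Type*} [Ring R] [NoZeroDivisors R] {a b : R}
    (hab : a * b ∈ Set.center R) (hb : b ∈ Set.center R) (hb0 : b ≠ 0) : a ∈ Set.center R := by
  refine Semigroup.mem_center_iff.mpr fun g => sub_eq_zero.mp ?_
  refine (mul_eq_zero.mp ?_).resolve_right hb0
  rw [sub_mul, mul_assoc, mul_assoc, Semigroup.mem_center_iff.mp hb g, ← mul_assoc a,
    Semigroup.mem_center_iff.mp hab, sub_self]

theorem Ideal.isTwoSided_span_singleton {R : Type*} [Ring R] {r : R} (hr : r ∈ Set.center R) :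
    (Ideal.span {r}).IsTwoSided := by
  refine ⟨fun b ha => ?_⟩
  obtain ⟨c, rfl⟩ := Ideal.mem_span_singleton'.mp ha
  exact Ideal.mem_span_singleton'.mpr ⟨c * b, by rw [mul_assoc, mul_assoc,
    Semigroup.mem_center_iff.mp hr b]⟩

structure IsSkewLaurent {D R : Type*} [DivisionRing D] [Ring R]
    (τ : RingAut D) (φ : D →+* R) (t : Rˣ) : Prop where
  t_mul_φ : ∀ d : D, (t : R) * φ d = φ (τ d) * t
  existsUnique_repr : ∀ x : R, ∃! a : ℤ →₀ D, x = a.sum fun i c => φ c * ((t ^ i : Rˣ) : R)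

namespace IsSkewLaurent

variable {D R : Type*} [DivisionRing D] [Ring R] {τ : RingAut D} {φ : D →+* R} {t : Rˣ}

variable (φ t) in
noncomputable def sumMonomials : (ℤ →₀ D) →+ R :=
  Finsupp.liftAddHom fun i => (AddMonoidHom.mulRight ((t ^ i : Rˣ) : R)).comp φ.toAddMonoidHom

theorem sumMonomials_apply (a : ℤ →₀ D) :
    sumMonomials φ t a = a.sum fun i c => φ c * ((t ^ i : Rˣ) : R) :=
  Finsupp.liftAddHom_apply _ _

variable (h : IsSkewLaurent τ φ t)
include h

theorem zpow_mul_φ (i : ℤ) (d : D) :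
    ((t ^ i : Rˣ) : R) * φ d = φ ((τ ^ i) d) * ((t ^ i : Rˣ) : R) := by
  have step {u v : Rˣ} {σ ρ : RingAut D} (hu : ∀ d, (u : R) * φ d = φ (σ d) * u)
      (hv : ∀ d, (v : R) * φ d = φ (ρ d) * v) (d : D) :
      ((u * v : Rˣ) : R) * φ d = φ ((σ * ρ) d) * ((u * v : Rˣ) : R) := by
    rw [Units.val_mul, mul_assoc, hv, ← mul_assoc, hu, mul_assoc, RingAut.mul_apply]
  have t_inv_mul (d : D) : ((t⁻¹ : Rˣ) : R) * φ d = φ ((τ⁻¹ : RingAut D) d) * t⁻¹ := by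
    refine SemiconjBy.units_inv_symm_left ?_
    rw [SemiconjBy, h.t_mul_φ, ← RingAut.mul_apply, mul_inv_cancel, RingAut.one_apply]
  induction i using Int.induction_on generalizing d with
  | zero => simp
  | succ i ih => rw [zpow_add_one, zpow_add_one]; exact step ih h.t_mul_φ d
  | pred i ih => rw [zpow_sub_one, zpow_sub_one]; exact step ih t_inv_mul d

theorem monomial_mul_monomial (i j : ℤ) (a b : D) :
    φ a * ((t ^ i : Rˣ) : R) * (φ b * ((t ^ j : Rˣ) : R)) =
      φ (a * (τ ^ i) b) * ((t ^ (i + j) : Rˣ) : R) := by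
  rw [mul_assoc, ← mul_assoc _ (φ b), h.zpow_mul_φ, map_mul, zpow_add, Units.val_mul]
  noncomm_ring

theorem bijective_sumMonomials :
    Function.Bijective (sumMonomials φ t) := by
  refine ⟨fun a b hab => ?_, fun x => ?_⟩
  · obtain ⟨c, -, hc⟩ := h.existsUnique_repr (sumMonomials φ t a)
    rw [hc a (sumMonomials_apply a), hc b (hab.trans (sumMonomials_apply b))]
  · obtain ⟨a, ha, -⟩ := h.existsUnique_repr x
    exact ⟨a, (sumMonomials_apply a).trans ha.symm⟩

noncomputable def repr : R ≃+ (ℤ →₀ D) :=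
  (AddEquiv.ofBijective (sumMonomials φ t) h.bijective_sumMonomials).symm

theorem sum_repr (x : R) : (h.repr x).sum (fun i c => φ c * ((t ^ i : Rˣ) : R)) = x := by
  rw [← sumMonomials_apply]
  exact (AddEquiv.ofBijective _ h.bijective_sumMonomials).apply_symm_apply x

theorem repr_sumMonomials (a : ℤ →₀ D) : h.repr (sumMonomials φ t a) = a :=
  (AddEquiv.ofBijective _ h.bijective_sumMonomials).symm_apply_apply a

theorem repr_monomial (i : ℤ) (c : D) : h.repr (φ c * ((t ^ i : Rˣ) : R)) = .single i c := by
  simpa [sumMonomials_apply] using h.repr_sumMonomials (.single i c)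

theorem repr_φ (c : D) : h.repr (φ c) = .single 0 c := by
  simpa using h.repr_monomial 0 c

theorem repr_monomial_mul_apply (i : ℤ) (c : D) (y : R) (k : ℤ) :
    h.repr (φ c * ((t ^ i : Rˣ) : R) * y) k = c * (τ ^ i) (h.repr y (k - i)) := by
  conv_lhs => rw [← h.sum_repr y, Finsupp.mul_sum]
  simp only [Finsupp.sum, map_sum, Finsupp.finsetSum_apply, h.monomial_mul_monomial,
    h.repr_monomial, Finsupp.single_apply]
  simp_rw [show ∀ j, (i + j = k) ↔ (k - i = j) by omega]
  rw [Finset.sum_ite_eq]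
  split_ifs with hk
  · rfl
  · rw [Finsupp.notMem_support_iff.mp hk, map_zero, mul_zero]

theorem repr_mul_apply (x y : R) (k : ℤ) :
    h.repr (x * y) k = (h.repr x).sum fun i c => c * (τ ^ i) (h.repr y (k - i)) := by
  conv_lhs => rw [← h.sum_repr x, Finsupp.sum_mul]
  simp only [Finsupp.sum, map_sum, Finsupp.finsetSum_apply, h.repr_monomial_mul_apply]

theorem repr_mul_monomial_apply (y : R) (j : ℤ) (c : D) (k : ℤ) :
    h.repr (y * (φ c * ((t ^ j : Rˣ) : R))) k = h.repr y (k - j) * (τ ^ (k - j)) c := by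
  conv_lhs => rw [← h.sum_repr y, Finsupp.sum_mul]
  simp only [Finsupp.sum, map_sum, Finsupp.finsetSum_apply, h.monomial_mul_monomial,
    h.repr_monomial, Finsupp.single_apply]
  simp_rw [show ∀ i, (i + j = k) ↔ (k - j = i) by omega]
  rw [Finset.sum_ite_eq]
  split_ifs with hk
  · rfl
  · rw [Finsupp.notMem_support_iff.mp hk, zero_mul]

theorem repr_φ_mul_apply (d : D) (y : R) (k : ℤ) : h.repr (φ d * y) k = d * h.repr y k := by
  simpa using h.repr_monomial_mul_apply 0 d y k

theorem repr_mul_φ_apply (y : R) (d : D) (k : ℤ) :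
    h.repr (y * φ d) k = h.repr y k * (τ ^ k) d := by
  simpa using h.repr_mul_monomial_apply y 0 d k

theorem repr_mul_zpow_apply (y : R) (j k : ℤ) :
    h.repr (y * ((t ^ j : Rˣ) : R)) k = h.repr y (k - j) := by
  simpa using h.repr_mul_monomial_apply y j 1 k

theorem repr_conj_apply (y : R) (k : ℤ) :
    h.repr ((t : R) * y * ((t⁻¹ : Rˣ) : R)) k = τ (h.repr y k) := by
  have := h.repr_monomial_mul_apply 1 1 y (k + 1)
  simp only [map_one, zpow_one, one_mul, add_sub_cancel_right] at this
  simpa [this] using h.repr_mul_zpow_apply ((t : R) * y) (-1) k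

-- `degree 0 = order 0 = 0`.
noncomputable def degree (x : R) : ℤ :=
  if hx : (h.repr x).support.Nonempty then (h.repr x).support.max' hx else 0

noncomputable def order (x : R) : ℤ :=
  if hx : (h.repr x).support.Nonempty then (h.repr x).support.min' hx else 0

noncomputable def width (x : R) : ℤ := h.degree x - h.order x

theorem support_nonempty {x : R} (hx : x ≠ 0) : (h.repr x).support.Nonempty :=
  Finsupp.support_nonempty_iff.mpr ((map_ne_zero_iff _ h.repr.injective).mpr hx)

theorem order_zero : h.order 0 = 0 := by
  simp [order]

theorem le_degree {x : R} {k : ℤ} (hk : h.repr x k ≠ 0) : k ≤ h.degree x := by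
  have hk' := Finsupp.mem_support_iff.mpr hk
  rw [degree, dif_pos ⟨k, hk'⟩]
  exact Finset.le_max' _ _ hk'

theorem order_le {x : R} {k : ℤ} (hk : h.repr x k ≠ 0) : h.order x ≤ k := by
  have hk' := Finsupp.mem_support_iff.mpr hk
  rw [order, dif_pos ⟨k, hk'⟩]
  exact Finset.min'_le _ _ hk'

theorem repr_degree_ne_zero {x : R} (hx : x ≠ 0) : h.repr x (h.degree x) ≠ 0 := by
  rw [degree, dif_pos (h.support_nonempty hx)]
  exact Finsupp.mem_support_iff.mp (Finset.max'_mem _ _)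

theorem repr_order_ne_zero {x : R} (hx : x ≠ 0) : h.repr x (h.order x) ≠ 0 := by
  rw [order, dif_pos (h.support_nonempty hx)]
  exact Finsupp.mem_support_iff.mp (Finset.min'_mem _ _)

theorem repr_eq_zero_of_degree_lt {x : R} {k : ℤ} (hk : h.degree x < k) : h.repr x k = 0 :=
  not_ne_iff.mp fun h' => (h.le_degree h').not_gt hk

theorem repr_eq_zero_of_lt_order {x : R} {k : ℤ} (hk : k < h.order x) : h.repr x k = 0 :=
  not_ne_iff.mp fun h' => (h.order_le h').not_gt hk

theorem degree_le_of_forall {x : R} (hx : x ≠ 0) {b : ℤ} (hb : ∀ k, b < k → h.repr x k = 0) :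
    h.degree x ≤ b :=
  not_lt.mp fun hlt => h.repr_degree_ne_zero hx (hb _ hlt)

theorem le_order_of_forall {x : R} (hx : x ≠ 0) {a : ℤ} (ha : ∀ k, k < a → h.repr x k = 0) :
    a ≤ h.order x :=
  not_lt.mp fun hlt => h.repr_order_ne_zero hx (ha _ hlt)

theorem order_le_degree (x : R) : h.order x ≤ h.degree x := by
  by_cases hx : x = 0
  · simp [hx, order, degree]
  · exact h.order_le (h.repr_degree_ne_zero hx)

theorem width_nonneg (x : R) : 0 ≤ h.width x :=
  sub_nonneg.mpr (h.order_le_degree x)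

theorem repr_mul_degree_add (x y : R) :
    h.repr (x * y) (h.degree x + h.degree y) =
      h.repr x (h.degree x) * (τ ^ h.degree x) (h.repr y (h.degree y)) := by
  rw [h.repr_mul_apply, Finsupp.sum, Finset.sum_eq_single (h.degree x)]
  · rw [add_sub_cancel_left]
  · intro i hi _
    have := h.le_degree (Finsupp.mem_support_iff.mp hi)
    rw [h.repr_eq_zero_of_degree_lt (x := y) (by omega), map_zero, mul_zero]
  · intro hx
    rw [Finsupp.notMem_support_iff.mp hx, zero_mul]

theorem repr_mul_order_add (x y : R) :
    h.repr (x * y) (h.order x + h.order y) =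
      h.repr x (h.order x) * (τ ^ h.order x) (h.repr y (h.order y)) := by
  rw [h.repr_mul_apply, Finsupp.sum, Finset.sum_eq_single (h.order x)]
  · rw [add_sub_cancel_left]
  · intro i hi _
    have := h.order_le (Finsupp.mem_support_iff.mp hi)
    rw [h.repr_eq_zero_of_lt_order (x := y) (by omega), map_zero, mul_zero]
  · intro hx
    rw [Finsupp.notMem_support_iff.mp hx, zero_mul]

theorem repr_mul_eq_zero_of_degree_add_lt {x y : R} {k : ℤ} (hk : h.degree x + h.degree y < k) :
    h.repr (x * y) k = 0 := by
  refine (h.repr_mul_apply x y k).trans (Finset.sum_eq_zero fun i hi => ?_)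
  have := h.le_degree (Finsupp.mem_support_iff.mp hi)
  dsimp only
  rw [h.repr_eq_zero_of_degree_lt (x := y) (by omega), map_zero, mul_zero]

theorem repr_mul_eq_zero_of_lt_order_add {x y : R} {k : ℤ} (hk : k < h.order x + h.order y) :
    h.repr (x * y) k = 0 := by
  refine (h.repr_mul_apply x y k).trans (Finset.sum_eq_zero fun i hi => ?_)
  have := h.order_le (Finsupp.mem_support_iff.mp hi)
  dsimp only
  rw [h.repr_eq_zero_of_lt_order (x := y) (by omega), map_zero, mul_zero]

theorem repr_mul_degree_add_ne_zero {x y : R} (hx : x ≠ 0) (hy : y ≠ 0) :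
    h.repr (x * y) (h.degree x + h.degree y) ≠ 0 := by
  rw [h.repr_mul_degree_add]
  exact mul_ne_zero (h.repr_degree_ne_zero hx)
    ((map_ne_zero_iff _ (τ ^ _).injective).mpr (h.repr_degree_ne_zero hy))

theorem repr_mul_order_add_ne_zero {x y : R} (hx : x ≠ 0) (hy : y ≠ 0) :
    h.repr (x * y) (h.order x + h.order y) ≠ 0 := by
  rw [h.repr_mul_order_add]
  exact mul_ne_zero (h.repr_order_ne_zero hx)
    ((map_ne_zero_iff _ (τ ^ _).injective).mpr (h.repr_order_ne_zero hy))

theorem noZeroDivisors : NoZeroDivisors R where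
  eq_zero_or_eq_zero_of_mul_eq_zero {x y} hxy := by
    by_contra! hne
    exact h.repr_mul_degree_add_ne_zero hne.1 hne.2 (by rw [hxy, map_zero, Finsupp.zero_apply])

theorem degree_mul {x y : R} (hx : x ≠ 0) (hy : y ≠ 0) :
    h.degree (x * y) = h.degree x + h.degree y :=
  le_antisymm (h.degree_le_of_forall (letI := h.noZeroDivisors; mul_ne_zero hx hy)
      fun _ hk => h.repr_mul_eq_zero_of_degree_add_lt hk)
    (h.le_degree (h.repr_mul_degree_add_ne_zero hx hy))

theorem order_mul {x y : R} (hx : x ≠ 0) (hy : y ≠ 0) :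
    h.order (x * y) = h.order x + h.order y :=
  le_antisymm (h.order_le (h.repr_mul_order_add_ne_zero hx hy))
    (h.le_order_of_forall (letI := h.noZeroDivisors; mul_ne_zero hx hy)
      fun _ hk => h.repr_mul_eq_zero_of_lt_order_add hk)

theorem width_mul {x y : R} (hx : x ≠ 0) (hy : y ≠ 0) :
    h.width (x * y) = h.width x + h.width y := by
  simp only [width, h.degree_mul hx hy, h.order_mul hx hy]
  ring

theorem monomial_ne_zero {c : D} (hc : c ≠ 0) (i : ℤ) : φ c * ((t ^ i : Rˣ) : R) ≠ 0 := by
  rw [← (map_ne_zero_iff _ h.repr.injective), h.repr_monomial]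
  exact Finsupp.single_ne_zero.mpr hc

theorem degree_monomial {c : D} (hc : c ≠ 0) (i : ℤ) : h.degree (φ c * ((t ^ i : Rˣ) : R)) = i := by
  simp [degree, h.repr_monomial, Finsupp.support_single _ hc]

theorem order_monomial {c : D} (hc : c ≠ 0) (i : ℤ) : h.order (φ c * ((t ^ i : Rˣ) : R)) = i := by
  simp [order, h.repr_monomial, Finsupp.support_single _ hc]

theorem width_monomial (c : D) (i : ℤ) : h.width (φ c * ((t ^ i : Rˣ) : R)) = 0 := by
  by_cases hc : c = 0
  · simp [hc, width, degree, order]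
  · rw [width, h.degree_monomial hc, h.order_monomial hc, sub_self]

theorem width_φ (c : D) : h.width (φ c) = 0 := by
  simpa using h.width_monomial c 0

theorem exists_eq_φ_iff_width_eq_zero {x : R} (hx : h.order x = 0) :
    (∃ d, x = φ d) ↔ h.width x = 0 := by
  refine ⟨fun ⟨d, hd⟩ => hd ▸ h.width_φ d, fun hw => ⟨h.repr x 0, h.repr.injective ?_⟩⟩
  ext k
  rw [h.repr_φ, Finsupp.single_apply]
  split_ifs with hk
  · rw [hk]
  · rcases lt_or_gt_of_ne hk with hk | hk
    · exact h.repr_eq_zero_of_degree_lt (by unfold width at hw; omega)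
    · exact h.repr_eq_zero_of_lt_order (by omega)

theorem zero_le_order_iff {x : R} : 0 ≤ h.order x ↔ ∀ i < 0, h.repr x i = 0 := by
  refine ⟨fun hx i hi => h.repr_eq_zero_of_lt_order (by omega), fun hx => ?_⟩
  by_cases hx0 : x = 0
  · rw [hx0, h.order_zero]
  · exact h.le_order_of_forall hx0 hx

theorem exists_eq_sum_iff_zero_le_order {x : R} :
    (∃ a : ℤ →₀ D, (∀ i < 0, a i = 0) ∧ x = a.sum fun i c => φ c * ((t ^ i : Rˣ) : R)) ↔
      0 ≤ h.order x := by
  rw [h.zero_le_order_iff]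
  refine ⟨fun ⟨a, ha, hx⟩ => ?_, fun hx => ⟨h.repr x, hx, (h.sum_repr x).symm⟩⟩
  rwa [hx, ← sumMonomials_apply, h.repr_sumMonomials]

theorem mem_center_of_commute {p : R} (hφ : ∀ d, Commute (φ d) p) (ht : Commute (t : R) p) :
    p ∈ Set.center R := by
  refine Semigroup.mem_center_iff.mpr fun g => ?_
  rw [← h.sum_repr g]
  exact (Commute.sum_left _ _ _ fun i _ => (hφ _).mul_left (ht.units_zpow_left i)).eq

variable {I : TwoSidedIdeal R} {p : R}

-- `R r` is a two-sided ideal strictly between `R (r q)` and `R`.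
theorem not_isCoatom_of_mem_iff {r q : R} (hI : ∀ y, y ∈ I ↔ ∃ s, y = s * (r * q))
    (hr : r ∈ Set.center R) (hwr : 0 < h.width r) (hwq : 0 < h.width q) : ¬ IsCoatom I := by
  have := h.noZeroDivisors
  have hw0 := h.width_φ 0
  rw [map_zero] at hw0
  have hr0 : r ≠ 0 := by rintro rfl; omega
  have hq0 : q ≠ 0 := by rintro rfl; omega
  have := Ideal.isTwoSided_span_singleton hr
  have hJ (y : R) : y ∈ (Ideal.span {r}).toTwoSided ↔ ∃ s, s * r = y :=
    Ideal.mem_toTwoSided.trans Ideal.mem_span_singleton'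
  have hIJ : I < (Ideal.span {r}).toTwoSided := by
    refine lt_of_le_of_ne (fun y hy => ?_) fun hIJ => ?_
    · obtain ⟨s, rfl⟩ := (hI y).mp hy
      exact (hJ _).mpr ⟨s * q, by rw [mul_assoc, Semigroup.mem_center_iff.mp hr q]⟩
    · obtain ⟨s, hs⟩ := (hI r).mp (hIJ ▸ (hJ r).mpr ⟨1, one_mul r⟩)
      have hs0 : s ≠ 0 := by rintro rfl; exact hr0 (by rw [hs, zero_mul])
      have := congrArg h.width hs
      rw [h.width_mul hs0 (mul_ne_zero hr0 hq0), h.width_mul hr0 hq0] at this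
      have := h.width_nonneg s
      omega
  intro hco
  obtain ⟨s, hs⟩ := (hJ 1).mp ((hco.2 _ hIJ).symm ▸ TwoSidedIdeal.mem_top R)
  have hs0 : s ≠ 0 := by rintro rfl; exact hr0 (by rw [← mul_one r, ← hs, zero_mul, mul_zero])
  have := congrArg h.width hs
  rw [h.width_mul hs0 hr0, ← map_one φ, h.width_φ] at this
  have := h.width_nonneg s
  omega

theorem exists_width_sub_mul_lt {y p : R} (hp : p ≠ 0) (hw : h.width p ≤ h.width y) :
    ∃ m : R, y - m * p = 0 ∨ h.width (y - m * p) < h.width y := by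
  set j := h.degree y - h.degree p
  set e := h.repr y (h.degree y) * ((τ ^ j) (h.repr p (h.degree p)))⁻¹
  have hlead : (τ ^ j) (h.repr p (h.degree p)) ≠ 0 :=
    (map_ne_zero_iff _ (τ ^ j).injective).mpr (h.repr_degree_ne_zero hp)
  have hz (k : ℤ) : h.repr (φ e * ((t ^ j : Rˣ) : R) * p) k =
      e * (τ ^ j) (h.repr p (k - j)) := h.repr_monomial_mul_apply j e p k
  refine ⟨φ e * ((t ^ j : Rˣ) : R), or_iff_not_imp_left.mpr fun hne => ?_⟩
  have hdeg : h.degree (y - φ e * ((t ^ j : Rˣ) : R) * p) ≤ h.degree y - 1 := by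
    refine h.degree_le_of_forall hne fun k hk => ?_
    rw [map_sub, Finsupp.sub_apply, hz]
    rcases eq_or_lt_of_le (show h.degree y ≤ k by omega) with rfl | hk
    · rw [show h.degree y - j = h.degree p by omega, mul_assoc, inv_mul_cancel₀ hlead,
        mul_one, sub_self]
    · rw [h.repr_eq_zero_of_degree_lt hk, h.repr_eq_zero_of_degree_lt (x := p) (by omega),
        map_zero, mul_zero, sub_zero]
  have hord : h.order y ≤ h.order (y - φ e * ((t ^ j : Rˣ) : R) * p) := by
    refine h.le_order_of_forall hne fun k hk => ?_
    unfold width at hw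
    rw [map_sub, Finsupp.sub_apply, hz, h.repr_eq_zero_of_lt_order hk,
      h.repr_eq_zero_of_lt_order (x := p) (by omega), map_zero, mul_zero, sub_zero]
  unfold width
  omega

structure IsMinWidth (I : TwoSidedIdeal R) (p : R) : Prop where
  mem : p ∈ I
  ne_zero : p ≠ 0
  width_le : ∀ y ∈ I, y ≠ 0 → h.width p ≤ h.width y

theorem exists_isMinWidth (hI : I ≠ ⊥) : ∃ p, h.IsMinWidth I p := by
  classical
  obtain ⟨x, hxI, hx⟩ : ∃ x ∈ I, x ≠ 0 := by
    by_contra! hI'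
    exact hI (eq_bot_iff.mpr fun x hx => (TwoSidedIdeal.mem_bot R).mpr (hI' x hx))
  have hex : ∃ n : ℕ, ∃ y ∈ I, y ≠ 0 ∧ (h.width y).toNat = n := ⟨_, x, hxI, hx, rfl⟩
  obtain ⟨p, hpI, hp, hpn⟩ := Nat.find_spec hex
  refine ⟨p, hpI, hp, fun y hyI hy => ?_⟩
  have := Nat.find_min' hex ⟨y, hyI, hy, rfl⟩
  have := h.width_nonneg p
  have := h.width_nonneg y
  omega

theorem exists_isMinWidth_normalized (hI : I ≠ ⊥) :
    ∃ p, h.IsMinWidth I p ∧ h.order p = 0 ∧ h.repr p 0 = 1 := by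
  obtain ⟨x, hx⟩ := h.exists_isMinWidth hI
  set m := h.order x
  have hc : h.repr x m ≠ 0 := h.repr_order_ne_zero hx.ne_zero
  have hφ := h.monomial_ne_zero (inv_ne_zero hc) 0
  have ht := h.monomial_ne_zero one_ne_zero (-m)
  have hφo := h.order_monomial (inv_ne_zero hc) 0
  have hto := h.order_monomial one_ne_zero (-m)
  have htw := h.width_monomial 1 (-m)
  simp only [zpow_zero, Units.val_one, mul_one, map_one, one_mul] at hφ ht hφo hto htw
  have hxt : x * ((t ^ (-m) : Rˣ) : R) ≠ 0 :=
    (letI := h.noZeroDivisors; mul_ne_zero hx.ne_zero ht)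
  have hp1 : h.repr (φ (h.repr x m)⁻¹ * (x * ((t ^ (-m) : Rˣ) : R))) 0 = 1 := by
    rw [h.repr_φ_mul_apply, h.repr_mul_zpow_apply, zero_sub, neg_neg, inv_mul_cancel₀ hc]
  refine ⟨_, ⟨I.mul_mem_left _ _ (I.mul_mem_right _ _ hx.mem), fun h0 => ?_, fun y hy hy0 => ?_⟩,
    ?_, hp1⟩
  · rw [h0, map_zero h.repr, Finsupp.zero_apply] at hp1
    exact zero_ne_one hp1
  · rw [h.width_mul hφ hxt, h.width_mul hx.ne_zero ht, h.width_φ, htw, zero_add, add_zero]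
    exact hx.width_le y hy hy0
  · rw [h.order_mul hφ hxt, h.order_mul hx.ne_zero ht, hφo, hto]
    omega

variable {h}

theorem IsMinWidth.mem_iff (hp : h.IsMinWidth I p) {y : R} : y ∈ I ↔ ∃ r, y = r * p := by
  refine ⟨fun hy => ?_, fun ⟨r, hr⟩ => hr ▸ I.mul_mem_left r p hp.mem⟩
  induction hn : (h.width y).toNat using Nat.strong_induction_on generalizing y with
  | _ n ih =>
  by_cases hy0 : y = 0
  · exact ⟨0, by rw [hy0, zero_mul]⟩
  obtain ⟨m, hm⟩ := h.exists_width_sub_mul_lt hp.ne_zero (hp.width_le y hy hy0)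
  have hmI : y - m * p ∈ I := I.sub_mem hy (I.mul_mem_left m p hp.mem)
  rcases hm with hm | hm
  · exact ⟨m, sub_eq_zero.mp hm⟩
  · have := h.width_nonneg (y - m * p)
    obtain ⟨r, hr⟩ := ih _ (by omega) hmI rfl
    exact ⟨r + m, by rw [add_mul, ← hr, sub_add_cancel]⟩

theorem IsMinWidth.eq_zero_of_support_subset (hp : h.IsMinWidth I p) {y : R} (hy : y ∈ I)
    (hsupp : ∀ k, h.repr y k ≠ 0 → h.repr p k ≠ 0 ∧ k ≠ h.order p) : y = 0 := by
  by_contra hy0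
  obtain ⟨hdeg, -⟩ := hsupp _ (h.repr_degree_ne_zero hy0)
  obtain ⟨hord, hord'⟩ := hsupp _ (h.repr_order_ne_zero hy0)
  have := h.le_degree hdeg
  have := h.order_le hord
  have := hp.width_le y hy hy0
  unfold width at this
  omega

-- Commutators of `p` with `φ d` and with `t` lie in `I` and have their support inside that of `p`,
-- with the constant term cancelling because it is `1`; minimality of the width kills them.
theorem IsMinWidth.mem_center (hp : h.IsMinWidth I p) (ho : h.order p = 0)
    (h1 : h.repr p 0 = 1) : p ∈ Set.center R := by
  refine h.mem_center_of_commute (fun d => ?_) ?_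
  · refine (sub_eq_zero.mp (hp.eq_zero_of_support_subset
      (I.sub_mem (I.mul_mem_right _ _ hp.mem) (I.mul_mem_left _ _ hp.mem)) fun k hk => ?_)).symm
    rw [map_sub, Finsupp.sub_apply, h.repr_mul_φ_apply, h.repr_φ_mul_apply] at hk
    refine ⟨fun h0 => hk (by rw [h0, zero_mul, mul_zero, sub_self]), fun hk0 => hk ?_⟩
    rw [hk0, ho, h1, zpow_zero, RingAut.one_apply, one_mul, mul_one, sub_self]
  · have hconj := hp.eq_zero_of_support_subset (y := (t : R) * p * ((t⁻¹ : Rˣ) : R) - p)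
      (I.sub_mem (I.mul_mem_right _ _ (I.mul_mem_left _ _ hp.mem)) hp.mem) fun k hk => ?_
    · exact (Units.mul_inv_eq_iff_eq_mul _).mp (sub_eq_zero.mp hconj)
    rw [map_sub, Finsupp.sub_apply, h.repr_conj_apply] at hk
    refine ⟨fun h0 => hk (by rw [h0, map_zero, sub_self]), fun hk0 => hk ?_⟩
    rw [hk0, ho, h1, map_one, sub_self]

variable (h) in
structure IsGenerator (I : TwoSidedIdeal R) (p : R) : Prop where
  mem_iff : ∀ y, y ∈ I ↔ ∃ r, y = r * p
  mem_center : p ∈ Set.center R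
  order_eq_zero : h.order p = 0
  repr_zero : h.repr p 0 = 1

theorem IsGenerator.mem (hp : h.IsGenerator I p) : p ∈ I :=
  (hp.mem_iff p).mpr ⟨1, (one_mul p).symm⟩

theorem IsGenerator.ne_zero (hp : h.IsGenerator I p) : p ≠ 0 := by
  rintro rfl
  exact zero_ne_one (α := D) (by simpa using hp.repr_zero)

theorem IsGenerator.one_le_degree (hp : h.IsGenerator I p) (htop : I ≠ ⊤) : 1 ≤ h.degree p := by
  by_contra! hdeg
  obtain ⟨d, hd⟩ := (h.exists_eq_φ_iff_width_eq_zero hp.order_eq_zero).mpr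
    (by have := h.order_le_degree p; have := hp.order_eq_zero; unfold width; omega)
  have hd1 : d = 1 := by simpa [hd, h.repr_φ] using hp.repr_zero
  exact htop (TwoSidedIdeal.eq_top _ (by simpa [hd, hd1] using hp.mem))

variable (h) in
theorem exists_isGenerator (hI : I ≠ ⊥) : ∃ p, h.IsGenerator I p := by
  obtain ⟨p, hp, ho, h1⟩ := h.exists_isMinWidth_normalized hI
  exact ⟨p, fun y => hp.mem_iff, hp.mem_center ho h1, ho, h1⟩

theorem IsGenerator.exists_eq_mul_of_not_isCoatom (hp : h.IsGenerator I p) (htop : I ≠ ⊤)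
    (hco : ¬ IsCoatom I) :
    ∃ r q : R, (r ∈ Set.center R ∧ 0 ≤ h.order r) ∧ (q ∈ Set.center R ∧ 0 ≤ h.order q) ∧
      (¬ ∃ d, r = φ d) ∧ (¬ ∃ d, q = φ d) ∧ p = r * q := by
  have := h.noZeroDivisors
  obtain ⟨J, hIJ, hJ⟩ : ∃ J, I < J ∧ J ≠ ⊤ := by simpa [IsCoatom, htop] using hco
  obtain ⟨q, hq⟩ := h.exists_isGenerator (ne_bot_of_gt hIJ)
  obtain ⟨r, hpr⟩ := (hq.mem_iff p).mp (hIJ.le hp.mem)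
  have hr0 : r ≠ 0 := by rintro rfl; exact hp.ne_zero (by rw [hpr, zero_mul])
  have hro : h.order r = 0 := by
    have := h.order_mul hr0 hq.ne_zero
    rw [← hpr, hp.order_eq_zero, hq.order_eq_zero] at this
    omega
  refine ⟨r, q, ⟨mem_center_of_mul_mem_center (hpr ▸ hp.mem_center) hq.mem_center hq.ne_zero,
    hro.ge⟩, ⟨hq.mem_center, hq.order_eq_zero.ge⟩, ?_, ?_, hpr⟩
  · rintro ⟨d, rfl⟩
    have hd : d ≠ 0 := by rintro rfl; exact hr0 (map_zero φ)
    have hqI : q ∈ I := by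
      rw [show q = φ d⁻¹ * p by rw [hpr, ← mul_assoc, ← map_mul, inv_mul_cancel₀ hd, map_one,
        one_mul]]
      exact I.mul_mem_left _ _ hp.mem
    refine hIJ.not_ge fun y hy => ?_
    obtain ⟨s, rfl⟩ := (hq.mem_iff y).mp hy
    exact I.mul_mem_left _ _ hqI
  · rw [h.exists_eq_φ_iff_width_eq_zero hq.order_eq_zero, width, hq.order_eq_zero]
    have := hq.one_le_degree hJ
    omega

theorem IsGenerator.isCoatom_iff (hp : h.IsGenerator I p) (htop : I ≠ ⊤) :
    IsCoatom I ↔ ¬ ∃ r q : R, (r ∈ Set.center R ∧ 0 ≤ h.order r) ∧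
      (q ∈ Set.center R ∧ 0 ≤ h.order q) ∧ (¬ ∃ d, r = φ d) ∧ (¬ ∃ d, q = φ d) ∧ p = r * q := by
  refine ⟨fun hco ⟨r, q, ⟨hr, _⟩, _, hrc, hqc, hpq⟩ => ?_,
    fun hirr => not_not.mp fun hco => hirr (hp.exists_eq_mul_of_not_isCoatom htop hco)⟩
  have hr0 : r ≠ 0 := by rintro rfl; exact hp.ne_zero (by rw [hpq, zero_mul])
  have hq0 : q ≠ 0 := by rintro rfl; exact hp.ne_zero (by rw [hpq, mul_zero])
  have hord := h.order_mul hr0 hq0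
  rw [← hpq, hp.order_eq_zero] at hord
  rw [h.exists_eq_φ_iff_width_eq_zero (by omega)] at hrc hqc
  exact h.not_isCoatom_of_mem_iff (hpq ▸ hp.mem_iff) hr
    ((h.width_nonneg r).lt_of_ne' hrc) ((h.width_nonneg q).lt_of_ne' hqc) hco

end IsSkewLaurent

/-- Let `D` be a division ring, `τ` an automorphism of `D`, and `R = D[t^{±1}; τ]` the
skew Laurent polynomial ring, axiomatized by a ring embedding `φ : D → R` and a unit `t`
with `t · φ d = φ (τ d) · t` and unique representation of elements as finite sums
`Σ φ (a i) * t ^ i`, `i : ℤ`. Let `I` be a non-zero proper two-sided ideal of `R`. Then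
there is a non-constant `p` in `S = Z(R) ∩ D[t;τ]` (i.e. a central element supported in
non-negative degrees) with non-zero constant term such that `I = R p`; moreover, `I` is a
maximal two-sided ideal if and only if `p` is irreducible in `S`, i.e. `p` is not a
product of two non-constant elements of `S`. -/
theorem twoSidedIdeal_skewLaurent
    (D R : Type) [DivisionRing D] [Ring R] (τ : RingAut D) (φ : D →+* R) (t : Rˣ)
    (hcomm : ∀ d : D, (t : R) * φ d = φ (τ d) * (t : R))
    (hbasis : ∀ x : R, ∃! a : ℤ →₀ D,
      x = a.sum fun i c => φ c * ((t ^ i : Rˣ) : R))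
    (I : TwoSidedIdeal R) (hbot : I ≠ ⊥) (htop : I ≠ ⊤) :
    ∃ (p : R) (a : ℤ →₀ D),
      p = (a.sum fun i c => φ c * ((t ^ i : Rˣ) : R)) ∧
      p ∈ Set.center R ∧
      (∀ i : ℤ, i < 0 → a i = 0) ∧
      a 0 ≠ 0 ∧
      (∃ i : ℤ, i ≠ 0 ∧ a i ≠ 0) ∧
      (I : Set R) = {x : R | ∃ r : R, x = r * p} ∧
      (IsCoatom I ↔ ¬ ∃ r q : R,
        (r ∈ Set.center R ∧ ∃ ar : ℤ →₀ D, (∀ i : ℤ, i < 0 → ar i = 0) ∧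
          r = ar.sum fun i c => φ c * ((t ^ i : Rˣ) : R)) ∧
        (q ∈ Set.center R ∧ ∃ aq : ℤ →₀ D, (∀ i : ℤ, i < 0 → aq i = 0) ∧
          q = aq.sum fun i c => φ c * ((t ^ i : Rˣ) : R)) ∧
        (¬ ∃ d : D, r = φ d) ∧ (¬ ∃ d : D, q = φ d) ∧ p = r * q) := by
  have h : IsSkewLaurent τ φ t := ⟨hcomm, hbasis⟩
  obtain ⟨p, hp⟩ := h.exists_isGenerator hbot
  have hdeg := hp.one_le_degree htop
  refine ⟨p, h.repr p, (h.sum_repr p).symm, hp.mem_center,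
    h.zero_le_order_iff.mp hp.order_eq_zero.ge, hp.repr_zero ▸ one_ne_zero,
    ⟨h.degree p, by omega, h.repr_degree_ne_zero hp.ne_zero⟩, Set.ext hp.mem_iff, ?_⟩
  simpa only [h.exists_eq_sum_iff_zero_le_order] using hp.isCoatom_iff htop
end
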